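/- Let C be a class of graphs that is weakly sparse and monadically dependent. Then C is nowhere dense. -/

import Mathlib

open FirstOrder FirstOrder.Language

/-- First-order languages with symbol types in `Type 0`. -/
abbrev Lang : Type 1 := FirstOrder.Language.{0,0}

namespace MS

/-! ### Expansions by unary predicates -/

/-- Relation symbols for a language consisting of countably many unary predicates. -/
inductive unaryRel : ℕ → Type
  | pred : ℕ → unaryRel 1

/-- The language consisting of countably many unary predicate symbols. -/
def unaryLang : Lang := ⟨fun _ => Empty, unaryRel⟩

/-- Interpreting the unary predicates by a family `U` of subsets of `M`
(a monadic lift / unary expansion). -/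
def unaryStructure {M : Type} (U : ℕ → Set M) : unaryLang.Structure M where
  funMap := fun {_} f _ => Empty.elim f
  RelMap := fun {_} r x => match r with | .pred i => x 0 ∈ U i

/-! ### Induced substructures and elementary subsets (for relational languages) -/

/-- The induced `L`-structure on a subset `A` of a relational `L`-structure. -/
def inducedStr (L : Lang) (hrel : L.IsRelational) {N : Type} (s : L.Structure N)
    (A : Set N) : L.Structure A where
  funMap := fun {n} f _ => ((hrel n).elim f)
  RelMap := fun {_} R x => s.RelMap R (fun i => (x i : N))

/-- `A` induces an elementary substructure of the relational structure `(N, s)`: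
every first-order formula evaluated at a tuple from `A` has the same truth value in the
induced structure on `A` and in the big structure.  (This is `A ⪯ N`.) -/
def IsElemSub (L : Lang) (hrel : L.IsRelational) {N : Type} (s : L.Structure N)
    (A : Set N) : Prop :=
  ∀ (n : ℕ) (φ : L.Formula (Fin n)) (x : Fin n → A),
    (letI := inducedStr L hrel s A; φ.Realize x) ↔
    (letI := s; φ.Realize (fun i => (x i : N)))

/-- A set of vertices induces an elementary substructure of a graph
(the graph being viewed as a first-order structure). -/
def GraphIsElemSub {V : Type} (H : SimpleGraph V) (A : Set V) : Prop :=
  ∀ (n : ℕ) (φ : Language.graph.Formula (Fin n)) (x : Fin n → A),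
    (letI := (SimpleGraph.induce A H).structure; φ.Realize x) ↔
    (letI := H.structure; φ.Realize (fun i => (x i : V)))

/-! ### Gaifman graphs, walks -/

/-- The Gaifman graph of a relational structure: distinct elements are adjacent iff
they occur together in some tuple of some relation. -/
def gaif (L : Lang) {N : Type} (s : L.Structure N) : SimpleGraph N where
  Adj u v := u ≠ v ∧ ∃ (n : ℕ) (R : L.Relations n) (x : Fin n → N),
    s.RelMap R x ∧ (∃ i, x i = u) ∧ (∃ j, x j = v)
  symm := by
    first
      | exact fun _ _ ⟨hne, n, R, x, hR, hu, hv⟩ => ⟨hne.symm, n, R, x, hR, hv, hu⟩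
      | exact ⟨fun _ _ ⟨hne, n, R, x, hR, hu, hv⟩ => ⟨hne.symm, n, R, x, hR, hv, hu⟩⟩
  loopless := by
    first
      | exact fun _ h => h.1 rfl
      | exact ⟨fun _ h => h.1 rfl⟩

/-- `a` and `b` are at distance `> r` in `G`: every walk between them is longer than `r`. -/
def FarApart {V : Type} (G : SimpleGraph V) (r : ℕ) (a b : V) : Prop :=
  ∀ p : G.Walk a b, r < p.length

/-- The ball of radius `r` around `a` in the Gaifman graph. -/
def ballSet (L : Lang) {N : Type} (s : L.Structure N) (r : ℕ) (a : N) : Set N :=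
  {v | ∃ p : (gaif L s).Walk a v, p.length ≤ r}

/-! ### Flips of relational structures -/

/-- The `n`-ary relation `Rel` on `N` is definable by a quantifier-free formula of `L`
with parameters from `S`. -/
def QFDefinable (L : Lang) {N : Type} (s : L.Structure N) (S : Set N)
    (n : ℕ) (Rel : (Fin n → N) → Prop) : Prop :=
  ∃ (k : ℕ) (φ : L.Formula (Fin n ⊕ Fin k)) (params : Fin k → N),
    φ.IsQF ∧ (∀ i, params i ∈ S) ∧
    ∀ x : Fin n → N, Rel x ↔ (letI := s; φ.Realize (Sum.elim x params))

/-- `(N, s')` is an `S`-flip of `(N, s)`: each relation of either structure is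
quantifier-free definable in the other with parameters from `S`
(and the new language is again finite relational). -/
def IsFlip (L L' : Lang) {N : Type} (s : L.Structure N) (s' : L'.Structure N)
    (S : Set N) : Prop :=
  L'.IsRelational ∧ Finite (Σ n, L'.Relations n) ∧
  (∀ (n : ℕ) (R : L'.Relations n), QFDefinable L s S n (fun x => s'.RelMap R x)) ∧
  (∀ (n : ℕ) (R : L.Relations n), QFDefinable L' s' S n (fun x => s.RelMap R x))

/-- `a ⫝_S^r b` for relational structures: some `S`-flip has no path of length `≤ r`
between `a` and `b` in its Gaifman graph, or `a = b ∈ S`. -/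
def FlipIndepStruct (L : Lang) {N : Type} (s : L.Structure N)
    (S : Set N) (r : ℕ) (a b : N) : Prop :=
  (a = b ∧ a ∈ S) ∨
  ∃ (L' : Lang) (s' : L'.Structure N),
    IsFlip L L' s s' S ∧ FarApart (gaif L' s') r a b

/-- `X ⫝_S^r Y` for sets: some `S`-flip has no path of length `≤ r` in its Gaifman graph
connecting an element of `X ∖ S` with an element of `Y`, nor an element of `X` with an
element of `Y ∖ S`. -/
def FlipIndepSetStruct (L : Lang) {N : Type} (s : L.Structure N)
    (S X Y : Set N) (r : ℕ) : Prop :=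
  ∃ (L' : Lang) (s' : L'.Structure N), IsFlip L L' s s' S ∧
    ∀ x ∈ X, ∀ y ∈ Y, (x ∉ S ∨ y ∉ S) → FarApart (gaif L' s') r x y

/-! ### Flips of graphs -/

/-- Two vertices have the same atomic type over `S` in the graph `H`. -/
def SameAtomicType {V : Type} (H : SimpleGraph V) (S : Set V) (u v : V) : Prop :=
  ∀ s ∈ S, (u = s ↔ v = s) ∧ (H.Adj u s ↔ H.Adj v s)

/-- `H'` is an `S`-definable flip of the graph `H`: between any two classes of the
partition of the vertices into atomic types over `S`, the adjacency relation is either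
kept or complemented wholesale. -/
def IsDefFlip {V : Type} (H H' : SimpleGraph V) (S : Set V) : Prop :=
  ∀ a b a' b' : V, a ≠ b → a' ≠ b' →
    SameAtomicType H S a a' → SameAtomicType H S b b' →
    ((H.Adj a b ↔ H'.Adj a b) ↔ (H.Adj a' b' ↔ H'.Adj a' b'))

/-- `a ⫝_B^r c` for graphs: there are a finite `B' ⊆ B` and a `B'`-definable flip `H'`
of `H` with `dist_{H'}(a, c) > r`. -/
def FlipIndepGraph {V : Type} (H : SimpleGraph V) (B : Set V) (r : ℕ) (a c : V) : Prop :=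
  ∃ B' : Set V, B' ⊆ B ∧ B'.Finite ∧
    ∃ H' : SimpleGraph V, IsDefFlip H H' B' ∧ FarApart H' r a c

/-! ### Forking independence (finite satisfiability over a model) -/

/-- `tp(u / Ms ∪ {v})` is finitely satisfiable in `Ms`: every first-order formula with
parameters from `Ms ∪ {v}` satisfied by `u` is satisfied by some element of `Ms`. -/
def FinSatOver (L : Lang) {N : Type} (s : L.Structure N) (Ms : Set N) (u v : N) : Prop :=
  ∀ (n : ℕ) (φ : L.Formula (Fin n ⊕ Fin 2)) (params : Fin n → N),
    (∀ i, params i ∈ Ms) →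
    (letI := s; φ.Realize (Sum.elim params ![u, v])) →
    ∃ u' ∈ Ms, (letI := s; φ.Realize (Sum.elim params ![u', v]))

/-! ### Stability and dependence notions -/

/-- The partitioned formula `φ(x̄; ȳ)` is stable in the structure `(N, s)`:
for some `k` there is no half-graph of order `k` defined by `φ`. -/
def StablePartFormula (L : Lang) {N : Type} (s : L.Structure N) {p q : ℕ}
    (φ : L.Formula (Fin p ⊕ Fin q)) : Prop :=
  ∃ k : ℕ, ¬ ∃ (a : Fin k → Fin p → N) (b : Fin k → Fin q → N),
    ∀ i j : Fin k, (letI := s; φ.Realize (Sum.elim (a i) (b j))) ↔ i ≤ j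

/-- A structure is atomic-stable if every atomic formula, under every partition of its
free variables, is stable in it. -/
def AtomicStable (L : Lang) {N : Type} (s : L.Structure N) : Prop :=
  ∀ (p q : ℕ) (φ : L.Formula (Fin p ⊕ Fin q)), φ.IsAtomic → StablePartFormula L s φ

/-- A structure is stable if every partitioned first-order formula is stable in it. -/
def StableStruct (L : Lang) {N : Type} (s : L.Structure N) : Prop :=
  ∀ (p q : ℕ) (φ : L.Formula (Fin p ⊕ Fin q)), StablePartFormula L s φ

/-- A single structure is monadically stable: no formula in the language expanded by
unary predicates can define arbitrarily long linear orders in unary expansions. -/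
def MonStableStruct (L : Lang) {N : Type} (s : L.Structure N) : Prop :=
  ¬ ∃ φ : (L.sum unaryLang).Formula (Fin 2),
    ∀ n : ℕ, ∃ (U : ℕ → Set N) (v : Fin n → N),
      ∀ i j : Fin n,
        (letI := s; letI := unaryStructure U; φ.Realize ![v i, v j]) ↔ i ≤ j

/-- A single structure is monadically dependent. -/
def MonDepStruct (L : Lang) {N : Type} (s : L.Structure N) : Prop :=
  ¬ ∃ (m m' : ℕ) (φ : (L.sum unaryLang).Formula (Fin m ⊕ Fin m')),
    ∀ k : ℕ, ∃ (U : ℕ → Set N) (a : Fin k → Fin m → N)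
      (b : Finset (Fin k) → Fin m' → N),
      ∀ (i : Fin k) (J : Finset (Fin k)),
        (letI := s; letI := unaryStructure U;
          φ.Realize (Sum.elim (a i) (b J))) ↔ i ∈ J

/-- A single structure is existentially monadically dependent. -/
def ExistMonDepStruct (L : Lang) {N : Type} (s : L.Structure N) : Prop :=
  ¬ ∃ (m m' : ℕ) (φ : (L.sum unaryLang).Formula (Fin m ⊕ Fin m')),
    φ.IsExistential ∧
    ∀ k : ℕ, ∃ (U : ℕ → Set N) (a : Fin k → Fin m → N)
      (b : Finset (Fin k) → Fin m' → N),
      ∀ (i : Fin k) (J : Finset (Fin k)),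
        (letI := s; letI := unaryStructure U;
          φ.Realize (Sum.elim (a i) (b J))) ↔ i ∈ J

/-! ### Classes of structures -/

/-- A class of `L`-structures (with domain in `Type 0`). -/
abbrev StructClass (L : Lang) : Type 1 := Set (Σ N : Type, L.Structure N)

/-- A class of structures is monadically stable. -/
def MonStableClass (L : Lang) (C : StructClass L) : Prop :=
  ¬ ∃ φ : (L.sum unaryLang).Formula (Fin 2),
    ∀ n : ℕ, ∃ A ∈ C, ∃ (U : ℕ → Set A.1) (v : Fin n → A.1),
      ∀ i j : Fin n,
        (letI := A.2; letI := unaryStructure U; φ.Realize ![v i, v j]) ↔ i ≤ j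

/-- A class of structures is monadically dependent. -/
def MonDepClass (L : Lang) (C : StructClass L) : Prop :=
  ¬ ∃ (m m' : ℕ) (φ : (L.sum unaryLang).Formula (Fin m ⊕ Fin m')),
    ∀ k : ℕ, ∃ A ∈ C, ∃ (U : ℕ → Set A.1) (a : Fin k → Fin m → A.1)
      (b : Finset (Fin k) → Fin m' → A.1),
      ∀ (i : Fin k) (J : Finset (Fin k)),
        (letI := A.2; letI := unaryStructure U;
          φ.Realize (Sum.elim (a i) (b J))) ↔ i ∈ J

/-- A class of structures is existentially monadically dependent. -/
def ExistMonDepClass (L : Lang) (C : StructClass L) : Prop :=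
  ¬ ∃ (m m' : ℕ) (φ : (L.sum unaryLang).Formula (Fin m ⊕ Fin m')),
    φ.IsExistential ∧
    ∀ k : ℕ, ∃ A ∈ C, ∃ (U : ℕ → Set A.1) (a : Fin k → Fin m → A.1)
      (b : Finset (Fin k) → Fin m' → A.1),
      ∀ (i : Fin k) (J : Finset (Fin k)),
        (letI := A.2; letI := unaryStructure U;
          φ.Realize (Sum.elim (a i) (b J))) ↔ i ∈ J

/-- The partitioned formula `φ` is stable in the class `C`. -/
def StablePartFormulaClass (L : Lang) (C : StructClass L) {p q : ℕ}
    (φ : L.Formula (Fin p ⊕ Fin q)) : Prop :=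
  ∃ k : ℕ, ∀ A ∈ C, ¬ ∃ (a : Fin k → Fin p → A.1) (b : Fin k → Fin q → A.1),
    ∀ i j : Fin k, (letI := A.2; φ.Realize (Sum.elim (a i) (b j))) ↔ i ≤ j

/-- A class of structures is atomic-stable. -/
def AtomicStableClass (L : Lang) (C : StructClass L) : Prop :=
  ∀ (p q : ℕ) (φ : L.Formula (Fin p ⊕ Fin q)), φ.IsAtomic → StablePartFormulaClass L C φ

/-- The theory of a class: all sentences true in every member. -/
def Thy (L : Lang) (C : StructClass L) : Set (L.Sentence) :=
  {σ | ∀ A ∈ C, (letI := A.2; Sentence.Realize A.1 σ)}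

/-- The elementary closure of a class: all models of its theory. -/
def ElemClosure (L : Lang) (C : StructClass L) : StructClass L :=
  {A | ∀ σ ∈ Thy L C, (letI := A.2; Sentence.Realize A.1 σ)}

/-- `A` is (isomorphic to) a weak substructure of `B`: the domain embeds and
relations are preserved. -/
def IsWeakSub (L : Lang) (A B : Σ N : Type, L.Structure N) : Prop :=
  ∃ ι : A.1 → B.1, Function.Injective ι ∧
    ∀ (n : ℕ) (R : L.Relations n) (x : Fin n → A.1),
      A.2.RelMap R x → B.2.RelMap R (ι ∘ x)

/-- The monotone closure of a class of structures. -/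
def MonotoneClosure (L : Lang) (C : StructClass L) : StructClass L :=
  {A | ∃ B ∈ C, IsWeakSub L A B}

/-! ### Graph containment notions -/

/-- `G` contains the complete bipartite graph `K_{t,t}` as a (not necessarily induced)
subgraph. -/
def HasBiclique {V : Type} (G : SimpleGraph V) (t : ℕ) : Prop :=
  ∃ f : Fin t ⊕ Fin t → V, Function.Injective f ∧
    ∀ i j : Fin t, G.Adj (f (Sum.inl i)) (f (Sum.inr j))

/-- `G` contains some `≤ r`-subdivision of the complete graph `K_t` as a subgraph:
there are `t` distinct principal vertices joined by pairwise internally-disjoint paths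
of length at most `r + 1` avoiding the principal vertices internally. -/
def HasSubdivClique {V : Type} (G : SimpleGraph V) (r t : ℕ) : Prop :=
  ∃ v : Fin t → V, Function.Injective v ∧
    ∃ p : ∀ i j : Fin t, G.Walk (v i) (v j),
      (∀ i j, i ≠ j → (p i j).IsPath ∧ (p i j).length ≤ r + 1) ∧
      (∀ i j k, i ≠ j → v k ∈ (p i j).support → k = i ∨ k = j) ∧
      (∀ i j k l, i ≠ j → k ≠ l → ¬(i = k ∧ j = l) → ¬(i = l ∧ j = k) →
        ∀ x, x ∈ (p i j).support → x ∈ (p k l).support → x ∈ Set.range v)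

/-! ### Separability, separation rank, flip-flatness -/

/-- The structure `(A, sA)` is `r`-separable: in every elementary extension, every
element is radius-`r` flip independent from (the image of) `A` over `A`. -/
def RSeparable (L : Lang) {A : Type} (sA : L.Structure A) (r : ℕ) : Prop :=
  ∀ (N : Type) (sN : L.Structure N) (f : @ElementaryEmbedding L A N sA sN) (a : N),
    a ∉ Set.range f.toFun →
    FlipIndepSetStruct L sN (Set.range f.toFun) {a} (Set.range f.toFun) r

/-- `SrkLe L s r k U S` expresses `srk_r(U / S) ≤ k` (separation rank at radius `r`). -/
def SrkLe (L : Lang) {N : Type} (s : L.Structure N) (r : ℕ) :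
    ℕ → Set N → Set N → Prop
  | 0, U, S => U ⊆ S
  | (k+1), U, S => U ⊆ S ∨ ∃ t : N, ∀ v ∈ U,
      SrkLe L s r k (U ∩ {u | ¬ FlipIndepStruct L s (S ∪ {t}) r v u}) (S ∪ {t})

/-- A class of structures is flip-flat. -/
def FlipFlat (L : Lang) (C : StructClass L) : Prop :=
  ∀ r : ℕ, ∃ k : ℕ, ∃ Ub : ℕ → ℕ, (∀ m : ℕ, ∃ n : ℕ, m ≤ Ub n) ∧
    ∀ A ∈ C, ∀ X : Finset A.1, ∃ S : Finset A.1, S.card ≤ k ∧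
      ∃ (L' : Lang) (s' : L'.Structure A.1),
        IsFlip L L' A.2 s' (↑S) ∧
        ∃ Y : Finset A.1, Y ⊆ X ∧ Ub X.card ≤ Y.card ∧
          ∀ a ∈ Y, ∀ b ∈ Y, a ≠ b → FarApart (gaif L' s') r a b

end MS

namespace MSAux
/-- Homogeneity of a coloring of strictly increasing `m`-tuples on a finite set. -/
def Homog {C : Type} (m : ℕ) (f : (Fin m → ℕ) → C) (Y : Finset ℕ) : Prop :=
  ∃ c, ∀ x : Fin m → ℕ, StrictMono x → (∀ i, x i ∈ Y) → f x = c

/-- Finite hypergraph Ramsey theorem. -/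
theorem ramsey (m : ℕ) (C : Type) [Fintype C] (n : ℕ) :
    ∃ T : ℕ, ∀ (f : (Fin m → ℕ) → C) (X : Finset ℕ), T ≤ X.card →
      ∃ Y ⊆ X, n ≤ Y.card ∧ Homog m f Y := by
  classical
  induction m generalizing n with
  | zero =>
    refine ⟨n, fun f X hX => ⟨X, Finset.Subset.refl X, hX, f finZeroElim, ?_⟩⟩
    intro x _ _
    congr 1
    ext i
    exact i.elim0
  | succ m ih =>
    -- inner induction: build a pre-homogeneous sequence of length M
    have inner : ∀ M : ℕ, ∃ T : ℕ, ∀ (f : (Fin (m+1) → ℕ) → C) (X : Finset ℕ),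
        T ≤ X.card →
        ∃ (a : Fin M → ℕ) (colr : Fin M → C), StrictMono a ∧ (∀ i, a i ∈ X) ∧
          (∀ x : Fin (m+1) → ℕ, StrictMono x → (∀ j, ∃ i, x j = a i) →
            ∀ i₀ : Fin M, x 0 = a i₀ → f x = colr i₀) := by
      intro M
      induction M with
      | zero =>
        exact ⟨0, fun f X _ => ⟨finZeroElim, finZeroElim, fun i => i.elim0,
          fun i => i.elim0, fun x _ hx _ => by
            obtain ⟨i, _⟩ := hx 0
            exact i.elim0⟩⟩
      | succ M ihM =>
        obtain ⟨TM, hTM⟩ := ihM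
        obtain ⟨Tm, hTm⟩ := ih TM
        refine ⟨Tm + 1, fun f X hX => ?_⟩
        have hXne : X.Nonempty := Finset.card_pos.mp (by omega)
        set a0 := X.min' hXne with ha0
        have ha0X : a0 ∈ X := X.min'_mem hXne
        set X' := X.erase a0 with hX'
        have hX'card : Tm ≤ X'.card := by
          rw [hX', Finset.card_erase_of_mem ha0X]; omega
        -- coloring of m-tuples by prepending a0
        set g : (Fin m → ℕ) → C := fun S => f (Fin.cases a0 S) with hg
        obtain ⟨Y, hYsub, hYcard, c, hc⟩ := hTm g X' hX'card
        obtain ⟨a, colr, hmono, hmem, hcol⟩ := hTM f Y hYcard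
        refine ⟨Fin.cases a0 a, Fin.cases c colr, ?_, ?_, ?_⟩
        · intro i j hij
          rcases Fin.eq_zero_or_eq_succ j with rfl | ⟨j', rfl⟩
          · exact absurd hij (by simp)
          rcases Fin.eq_zero_or_eq_succ i with rfl | ⟨i', rfl⟩
          · simp only [Fin.cases_zero, Fin.cases_succ]
            have : a j' ∈ X' := hYsub (hmem j')
            have hne : a j' ≠ a0 := Finset.ne_of_mem_erase this
            have : a j' ∈ X := Finset.mem_of_mem_erase this
            have := X.min'_le _ this
            omega
          · simp only [Fin.cases_succ]
            exact hmono (by exact_mod_cast Fin.succ_lt_succ_iff.mp hij)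
        · intro i
          rcases Fin.eq_zero_or_eq_succ i with rfl | ⟨i', rfl⟩
          · simpa using ha0X
          · simp only [Fin.cases_succ]
            exact Finset.mem_of_mem_erase (hYsub (hmem i'))
        · intro x hx hxa i₀ hx0
          rcases Fin.eq_zero_or_eq_succ i₀ with rfl | ⟨i₀', rfl⟩
          · -- x 0 = a0 ; the rest are among the a's, hence in Y
            have hxtail : ∀ j : Fin m, x j.succ ∈ Y := by
              intro j
              obtain ⟨i, hi⟩ := hxa j.succ
              rcases Fin.eq_zero_or_eq_succ i with rfl | ⟨i', rfl⟩
              · exfalso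
                have h1 : x 0 < x j.succ := hx (Fin.succ_pos j)
                rw [hx0, hi] at h1
                simp at h1
              · rw [hi]; exact hmem i'
            have hxeq : x = Fin.cases a0 (fun j => x j.succ) := by
              ext j
              rcases Fin.eq_zero_or_eq_succ j with rfl | ⟨j', rfl⟩
              · simpa using hx0
              · simp
            rw [hxeq]
            have := hc (fun j => x j.succ)
              (fun i j hij => hx (Fin.succ_lt_succ_iff.mpr hij)) hxtail
            simpa [hg] using this
          · -- x 0 = a i₀'.succ : all entries of x are among later a's
            have : f x = colr i₀' := by
              refine hcol x hx ?_ i₀' (by simpa using hx0)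
              intro j
              obtain ⟨i, hi⟩ := hxa j
              rcases Fin.eq_zero_or_eq_succ i with rfl | ⟨i', rfl⟩
              · exfalso
                rcases Fin.eq_zero_or_eq_succ j with rfl | ⟨j', rfl⟩
                · rw [hx0] at hi
                  simp only [Fin.cases_succ, Fin.cases_zero] at hi
                  have h2 : a0 < a i₀' := by
                    have : a i₀' ∈ X' := hYsub (hmem i₀')
                    have hne : a i₀' ≠ a0 := Finset.ne_of_mem_erase this
                    have := X.min'_le _ (Finset.mem_of_mem_erase this)
                    omega
                  omega
                · have h1 : x 0 < x j'.succ := hx (Fin.succ_pos j')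
                  rw [hx0, hi] at h1
                  simp only [Fin.cases_succ, Fin.cases_zero] at h1
                  have h2 : a0 < a i₀' := by
                    have : a i₀' ∈ X' := hYsub (hmem i₀')
                    have hne : a i₀' ≠ a0 := Finset.ne_of_mem_erase this
                    have := X.min'_le _ (Finset.mem_of_mem_erase this)
                    omega
                  omega
              · exact ⟨i', by simpa using hi⟩
            simpa using this
    -- now conclude by pigeonhole
    obtain ⟨T, hT⟩ := inner (Fintype.card C * n + 1)
    refine ⟨T, fun f X hX => ?_⟩
    obtain ⟨a, colr, hmono, hmem, hcol⟩ := hT f X hX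
    -- pigeonhole on colr
    have hpig : ∃ c : C, n ≤ (Finset.univ.filter (fun i => colr i = c)).card := by
      by_contra hcon
      push_neg at hcon
      have hsum := Finset.card_eq_sum_card_fiberwise
        (f := colr) (s := Finset.univ) (t := Finset.univ) (fun x _ => Finset.mem_univ _)
      have hle : ∀ c ∈ Finset.univ (α := C),
          (Finset.univ.filter (fun i => colr i = c)).card ≤ n - 1 := by
        intro c _
        have := hcon c
        omega
      have := Finset.sum_le_sum hle
      rw [← hsum] at this
      simp only [Finset.sum_const, smul_eq_mul, Finset.card_univ, Fintype.card_fin] at this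
      have hn : 1 ≤ n := by
        by_contra h
        have : n = 0 := by omega
        subst this
        exact absurd (hcon (colr 0)) (by omega)
      have : Fintype.card C * n + 1 ≤ Fintype.card C * (n-1) := this
      nlinarith [Fintype.card C, Nat.sub_le n 1]
    obtain ⟨c, hc⟩ := hpig
    set Fib := Finset.univ.filter (fun i => colr i = c) with hFib
    refine ⟨Fib.image a, ?_, ?_, c, ?_⟩
    · intro y hy
      obtain ⟨i, _, rfl⟩ := Finset.mem_image.mp hy
      exact hmem i
    · rwa [Finset.card_image_of_injective _ hmono.injective]
    · intro x hx hxY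
      have hxa : ∀ j, ∃ i, x j = a i ∧ i ∈ Fib := by
        intro j
        obtain ⟨i, hi, heq⟩ := Finset.mem_image.mp (hxY j)
        exact ⟨i, heq.symm, hi⟩
      obtain ⟨i₀, hi₀, hi₀F⟩ := hxa 0
      have := hcol x hx (fun j => ⟨(hxa j).choose, (hxa j).choose_spec.1⟩) i₀ hi₀
      rw [this]
      exact (Finset.mem_filter.mp hi₀F).2



def HasBiclique' {V : Type} (G : SimpleGraph V) (t : ℕ) : Prop :=
  ∃ f : Fin t ⊕ Fin t → V, Function.Injective f ∧
    ∀ i j : Fin t, G.Adj (f (Sum.inl i)) (f (Sum.inr j))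

/-- From two disjoint-by-adjacency finsets realize a biclique. -/
theorem biclique_of_finsets {V : Type} (G : SimpleGraph V) (t : ℕ)
    (S₁ S₂ : Finset V) (hc₁ : S₁.card = t) (hc₂ : S₂.card = t)
    (hadj : ∀ x ∈ S₁, ∀ y ∈ S₂, G.Adj x y) : HasBiclique' G t := by
  classical
  set e₁ : Fin t → V := fun i => (S₁.equivFin.symm (Fin.cast hc₁.symm i) : V) with he₁
  set e₂ : Fin t → V := fun i => (S₂.equivFin.symm (Fin.cast hc₂.symm i) : V) with he₂
  have hm₁ : ∀ i, e₁ i ∈ S₁ := fun i => (S₁.equivFin.symm _).2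
  have hm₂ : ∀ i, e₂ i ∈ S₂ := fun i => (S₂.equivFin.symm _).2
  have hinj₁ : Function.Injective e₁ := by
    intro i j h
    have := Subtype.ext h (p := (· ∈ S₁))
    have := S₁.equivFin.symm.injective this
    simpa [Fin.ext_iff] using congrArg Fin.val this
  have hinj₂ : Function.Injective e₂ := by
    intro i j h
    have := Subtype.ext h (p := (· ∈ S₂))
    have := S₂.equivFin.symm.injective this
    simpa [Fin.ext_iff] using congrArg Fin.val this
  have hadj' : ∀ i j, G.Adj (e₁ i) (e₂ j) := fun i j => hadj _ (hm₁ i) _ (hm₂ j)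
  refine ⟨Sum.elim e₁ e₂, ?_, hadj'⟩
  intro x y h
  match x, y with
  | Sum.inl i, Sum.inl j => exact congrArg Sum.inl (hinj₁ h)
  | Sum.inr i, Sum.inr j => exact congrArg Sum.inr (hinj₂ h)
  | Sum.inl i, Sum.inr j =>
    exfalso
    simp only [Sum.elim_inl, Sum.elim_inr] at h
    have hA := hadj' i j
    rw [h] at hA
    exact G.loopless.irrefl _ hA
  | Sum.inr i, Sum.inl j =>
    exfalso
    simp only [Sum.elim_inl, Sum.elim_inr] at h
    have hA := hadj' j i
    rw [← h] at hA
    exact G.loopless.irrefl _ hA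

/-- Pigeonhole: many vertices each with ≥ t neighbours inside a finite set U force
a biclique `K_{t,t}`. -/
theorem pig {V : Type} (G : SimpleGraph V) (t : ℕ) (U xs : Finset V)
    (hdeg : ∀ x ∈ xs, ∃ Nx ⊆ U, t ≤ Nx.card ∧ ∀ u ∈ Nx, G.Adj x u)
    (hbig : t * 2 ^ U.card ≤ xs.card) (ht : 1 ≤ t) :
    HasBiclique' G t := by
  classical
  set F : V → Finset V := fun x => {u ∈ U | G.Adj x u} with hF
  have hdeg' : ∀ x ∈ xs, t ≤ (F x).card := by
    intro x hx
    obtain ⟨Nx, hsub, hcard, hadj⟩ := hdeg x hx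
    refine le_trans hcard (Finset.card_le_card ?_)
    intro u hu
    exact Finset.mem_filter.mpr ⟨hsub hu, hadj u hu⟩
  have hmaps : ∀ x ∈ xs, F x ∈ U.powerset := by
    intro x _
    exact Finset.mem_powerset.mpr (Finset.filter_subset _ _)
  have hcard : U.powerset.card * (t - 1) < xs.card := by
    rw [Finset.card_powerset]
    have h2 : 0 < 2 ^ U.card := Nat.pow_pos (by norm_num : (0:ℕ) < 2)
    calc 2 ^ U.card * (t-1) < 2 ^ U.card * t :=
          mul_lt_mul_of_pos_left (by omega) h2
      _ = t * 2 ^ U.card := Nat.mul_comm _ _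
      _ ≤ xs.card := hbig
  obtain ⟨W, hWp, hWcard⟩ :=
    Finset.exists_lt_card_fiber_of_mul_lt_card_of_maps_to hmaps hcard
  set xs' := {x ∈ xs | F x = W} with hxs'
  have hxs'card : t ≤ xs'.card := by omega
  have hxs'ne : xs'.Nonempty := Finset.card_pos.mp (by omega)
  obtain ⟨x₀, hx₀⟩ := hxs'ne
  have hx₀W : F x₀ = W := (Finset.mem_filter.mp hx₀).2
  have hWt : t ≤ W.card := by
    rw [← hx₀W]
    exact hdeg' x₀ (Finset.mem_filter.mp hx₀).1
  obtain ⟨S₁, hS₁sub, hS₁⟩ := Finset.exists_subset_card_eq hxs'card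
  obtain ⟨S₂, hS₂sub, hS₂⟩ := Finset.exists_subset_card_eq hWt
  refine biclique_of_finsets G t S₁ S₂ hS₁ hS₂ ?_
  intro x hx y hy
  have hxW : F x = W := (Finset.mem_filter.mp (hS₁sub hx)).2
  have : y ∈ F x := hxW ▸ hS₂sub hy
  exact (Finset.mem_filter.mp this).2



open SimpleGraph

theorem getVert_inj {V : Type} {G : SimpleGraph V} {u v : V} (p : G.Walk u v)
    (hp : p.IsPath) : ∀ i j, i ≤ p.length → j ≤ p.length →
      p.getVert i = p.getVert j → i = j := by
  induction p with
  | nil => intro i j hi hj _; simp at hi hj; omega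
  | @cons u w v h q ih =>
    intro i j hi hj heq
    rw [SimpleGraph.Walk.cons_isPath_iff] at hp
    match i, j with
    | 0, 0 => rfl
    | 0, j+1 =>
      exfalso
      apply hp.2
      rw [SimpleGraph.Walk.mem_support_iff_exists_getVert]
      refine ⟨j, ?_, ?_⟩
      · rw [← Walk.getVert_cons_succ q h]
        rw [← heq]
        rfl
      · simpa [SimpleGraph.Walk.length_cons] using hj
    | i+1, 0 =>
      exfalso
      apply hp.2
      rw [SimpleGraph.Walk.mem_support_iff_exists_getVert]
      refine ⟨i, ?_, ?_⟩
      · rw [← Walk.getVert_cons_succ q h]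
        rw [heq]
        rfl
      · simpa [SimpleGraph.Walk.length_cons] using hi
    | i+1, j+1 =>
      have := ih hp.1 i j (by simpa [SimpleGraph.Walk.length_cons] using hi)
        (by simpa [SimpleGraph.Walk.length_cons] using hj)
        (by simpa [Walk.getVert_cons_succ] using heq)
      omega

lemma sm2 {a b : ℕ} (h : a < b) : StrictMono ![a, b] := by
  intro i j hij
  fin_cases i <;> fin_cases j <;> simp_all <;> omega

lemma sm3 {a b c : ℕ} (h1 : a < b) (h2 : b < c) : StrictMono ![a, b, c] := by
  intro i j hij
  fin_cases i <;> fin_cases j <;> simp_all <;> omega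

lemma sm4 {a b c d : ℕ} (h1 : a < b) (h2 : b < c) (h3 : c < d) :
    StrictMono ![a, b, c, d] := by
  intro i j hij
  fin_cases i <;> fin_cases j <;> simp_all <;> omega

open Classical in
/-- The set of internal vertices of a walk. -/
noncomputable def intFinset {V : Type} {G : SimpleGraph V} {u v : V} (w : G.Walk u v) :
    Finset V := (Finset.Ioo 0 w.length).image w.getVert

lemma mem_intFinset {V : Type} {G : SimpleGraph V} {u v : V} {w : G.Walk u v} {x : V} :
    x ∈ intFinset w ↔ ∃ q, 0 < q ∧ q < w.length ∧ w.getVert q = x := by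
  classical
  simp only [intFinset, Finset.mem_image, Finset.mem_Ioo]
  constructor
  · rintro ⟨q, ⟨h1, h2⟩, h3⟩; exact ⟨q, h1, h2, h3⟩
  · rintro ⟨q, h1, h2, h3⟩; exact ⟨q, ⟨h1, h2⟩, h3⟩

lemma intFinset_card_le {V : Type} {G : SimpleGraph V} {u v : V} {w : G.Walk u v}
    {r : ℕ} (h : w.length ≤ r + 1) : (intFinset w).card ≤ r := by
  classical
  calc (intFinset w).card ≤ (Finset.Ioo 0 w.length).card := Finset.card_image_le
    _ ≤ r := by rw [Nat.card_Ioo]; omega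



/-- Config A: many vertices each adjacent into each of `t₀` disjoint small blocks. -/
theorem configA {V : Type} (G : SimpleGraph V) (t₀ r : ℕ) (ht₀ : 1 ≤ t₀)
    (B : Fin t₀ → Finset V) (hBcard : ∀ l, (B l).card ≤ r)
    (hBdisj : ∀ l l', l ≠ l' → ∀ x ∈ B l, x ∉ B l')
    (xs : Finset V) (hxs : t₀ * 2 ^ (r * t₀) ≤ xs.card)
    (hadj : ∀ x ∈ xs, ∀ l, ∃ u ∈ B l, G.Adj x u) : HasBiclique' G t₀ := by
  classical
  set U : Finset V := Finset.univ.biUnion B with hU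
  have hUcard : U.card ≤ r * t₀ := by
    calc U.card ≤ ∑ l, (B l).card := Finset.card_biUnion_le
      _ ≤ ∑ _l : Fin t₀, r := Finset.sum_le_sum (fun l _ => hBcard l)
      _ = t₀ * r := by simp [Finset.sum_const, Nat.mul_comm]
      _ = r * t₀ := Nat.mul_comm _ _
  apply pig G t₀ U xs ?_ ?_ ht₀
  · intro x hx
    have hg : ∀ l : Fin t₀, ∃ u, u ∈ B l ∧ G.Adj x u := by
      intro l
      obtain ⟨u, hu, ha⟩ := hadj x hx l
      exact ⟨u, hu, ha⟩
    choose g hgB hgA using hg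
    have hginj : Function.Injective g := by
      intro l l' h
      by_contra hne
      exact hBdisj l l' hne (g l) (hgB l) (h ▸ hgB l')
    refine ⟨Finset.univ.image g, ?_, ?_, ?_⟩
    · intro u hu
      obtain ⟨l, _, rfl⟩ := Finset.mem_image.mp hu
      exact Finset.mem_biUnion.mpr ⟨l, Finset.mem_univ _, hgB l⟩
    · rw [Finset.card_image_of_injective _ hginj, Finset.card_univ, Fintype.card_fin]
    · intro u hu
      obtain ⟨l, _, rfl⟩ := Finset.mem_image.mp hu
      exact hgA l
  · calc t₀ * 2 ^ U.card ≤ t₀ * 2 ^ (r * t₀) :=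
        Nat.mul_le_mul_left _ (Nat.pow_le_pow_right (by omega) hUcard)
      _ ≤ xs.card := hxs

/-- Config B: two families of disjoint small blocks with all cross pairs chorded. -/
theorem configB {V : Type} (G : SimpleGraph V) (t₀ r m₁ M : ℕ) (ht₀ : 1 ≤ t₀)
    (hm₁ : r * (t₀ - 1) < m₁)
    (L : Fin m₁ → Finset V) (R : Fin M → Finset V)
    (hLcard : ∀ j, (L j).card ≤ r) (hRcard : ∀ l, (R l).card ≤ r)
    (hLd : ∀ j j', j ≠ j' → ∀ x ∈ L j, x ∉ L j')
    (hRd : ∀ l l', l ≠ l' → ∀ x ∈ R l, x ∉ R l')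
    (hM : t₀ * 2 ^ (r * m₁) ≤ M)
    (hedge : ∀ j l, ∃ x ∈ L j, ∃ y ∈ R l, G.Adj x y) : HasBiclique' G t₀ := by
  classical
  have hedge' : ∀ (j : Fin m₁) (l : Fin M), ∃ pr : V × V,
      pr.1 ∈ L j ∧ pr.2 ∈ R l ∧ G.Adj pr.1 pr.2 := by
    intro j l
    obtain ⟨x, hx, y, hy, ha⟩ := hedge j l
    exact ⟨(x, y), hx, hy, ha⟩
  choose pr hpL hpR hpA using hedge'
  set U : Finset V := Finset.univ.biUnion L with hU
  have hUcard : U.card ≤ r * m₁ := by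
    calc U.card ≤ ∑ j, (L j).card := Finset.card_biUnion_le
      _ ≤ ∑ _j : Fin m₁, r := Finset.sum_le_sum (fun j _ => hLcard j)
      _ = m₁ * r := by simp [Finset.sum_const, Nat.mul_comm]
      _ = r * m₁ := Nat.mul_comm _ _
  -- for each right block, find a popular vertex
  have hpop : ∀ l : Fin M, ∃ y ∈ R l, t₀ ≤
      (Finset.univ.filter (fun j : Fin m₁ => (pr j l).2 = y)).card := by
    intro l
    have hmaps : ∀ j ∈ Finset.univ (α := Fin m₁), (pr j l).2 ∈ R l :=
      fun j _ => hpR j l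
    have hcard : (R l).card * (t₀ - 1) < (Finset.univ (α := Fin m₁)).card := by
      rw [Finset.card_univ, Fintype.card_fin]
      calc (R l).card * (t₀ - 1) ≤ r * (t₀ - 1) :=
            Nat.mul_le_mul_right _ (hRcard l)
        _ < m₁ := hm₁
    obtain ⟨y, hy, hfib⟩ :=
      Finset.exists_lt_card_fiber_of_mul_lt_card_of_maps_to hmaps hcard
    exact ⟨y, hy, by omega⟩
  choose yv hyR hyfib using hpop
  have hyinj : Function.Injective yv := by
    intro l l' h
    by_contra hne
    exact hRd l l' hne (yv l) (hyR l) (h ▸ hyR l')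
  apply pig G t₀ U (Finset.univ.image yv) ?_ ?_ ht₀
  · intro x hx
    obtain ⟨l, _, rfl⟩ := Finset.mem_image.mp hx
    set Fib := Finset.univ.filter (fun j : Fin m₁ => (pr j l).2 = yv l) with hFib
    have hinjL : ∀ j ∈ Fib, ∀ j' ∈ Fib, (pr j l).1 = (pr j' l).1 → j = j' := by
      intro j _ j' _ h
      by_contra hne
      exact hLd j j' hne (pr j l).1 (hpL j l) (h ▸ hpL j' l)
    refine ⟨Fib.image (fun j => (pr j l).1), ?_, ?_, ?_⟩
    · intro u hu
      obtain ⟨j, _, rfl⟩ := Finset.mem_image.mp hu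
      exact Finset.mem_biUnion.mpr ⟨j, Finset.mem_univ _, hpL j l⟩
    · rw [Finset.card_image_of_injOn hinjL]
      exact hyfib l
    · intro u hu
      obtain ⟨j, hj, rfl⟩ := Finset.mem_image.mp hu
      have := hpA j l
      have heq : (pr j l).2 = yv l := (Finset.mem_filter.mp hj).2
      rw [heq] at this
      exact this.symm
  · rw [Finset.card_image_of_injective _ hyinj, Finset.card_univ, Fintype.card_fin]
    calc t₀ * 2 ^ U.card ≤ t₀ * 2 ^ (r * m₁) :=
        Nat.mul_le_mul_left _ (Nat.pow_le_pow_right (by omega) hUcard)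
      _ ≤ M := hM

/-- A clean (induced, uniform-length) subdivision system. -/
structure Clean {V : Type} (G : SimpleGraph V) (n s : ℕ) where
  v : Fin n → V
  inj : Function.Injective v
  p : ∀ i j : Fin n, G.Walk (v i) (v j)
  len : ∀ i j : Fin n, (i:ℕ) < (j:ℕ) → (p i j).length = s
  path : ∀ i j : Fin n, (i:ℕ) < (j:ℕ) → (p i j).IsPath
  int_ne : ∀ i j : Fin n, (i:ℕ) < (j:ℕ) → ∀ q, 0 < q → q < s →
    ∀ k, (p i j).getVert q ≠ v k
  disj : ∀ i j i' j' : Fin n, (i:ℕ) < (j:ℕ) → (i':ℕ) < (j':ℕ) → (i ≠ i' ∨ j ≠ j') →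
    ∀ q q', 0 < q → q < s → 0 < q' → q' < s →
      (p i j).getVert q ≠ (p i' j').getVert q'
  chord1 : ∀ i j k : Fin n, (i:ℕ) < (j:ℕ) → k ≠ i → k ≠ j →
    ∀ q, 0 < q → q < s → ¬ G.Adj (v k) ((p i j).getVert q)
  chord2 : ∀ i j i' j' : Fin n, (i:ℕ) < (j:ℕ) → (i':ℕ) < (j':ℕ) → (i ≠ i' ∨ j ≠ j') →
    ∀ q q', 0 < q → q < s → 0 < q' → q' < s →
      ¬ G.Adj ((p i j).getVert q) ((p i' j').getVert q')

section Subdiv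

variable {V : Type} {G : SimpleGraph V} {T : ℕ} (v : Fin T → V)
  (p : ∀ i j : Fin T, G.Walk (v i) (v j))

/-- Internal vertices of the subdivision paths avoid all principal vertices. -/
theorem subdiv_int_ne
    (h1 : ∀ i j, i ≠ j → (p i j).IsPath)
    (h2 : ∀ i j k, i ≠ j → v k ∈ (p i j).support → k = i ∨ k = j) :
    ∀ (a b : Fin T), a ≠ b → ∀ q, 0 < q → q < (p a b).length →
      ∀ k, (p a b).getVert q ≠ v k := by
  intro a b hab q hq0 hql k heq
  have hmem : v k ∈ (p a b).support := by
    rw [SimpleGraph.Walk.mem_support_iff_exists_getVert]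
    exact ⟨q, heq, by omega⟩
  rcases h2 a b k hab hmem with hk | hk
  · rw [hk] at heq
    have := getVert_inj (p a b) (h1 a b hab) q 0 (by omega) (by omega)
      (heq.trans (SimpleGraph.Walk.getVert_zero _).symm)
    omega
  · rw [hk] at heq
    have := getVert_inj (p a b) (h1 a b hab) q (p a b).length (by omega) (by omega)
      (heq.trans (SimpleGraph.Walk.getVert_length _).symm)
    omega

/-- Internal vertices of distinct paths are distinct. -/
theorem subdiv_disj
    (h1 : ∀ i j, i ≠ j → (p i j).IsPath)
    (h2 : ∀ i j k, i ≠ j → v k ∈ (p i j).support → k = i ∨ k = j)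
    (h3 : ∀ i j k l, i ≠ j → k ≠ l → ¬(i = k ∧ j = l) → ¬(i = l ∧ j = k) →
        ∀ x, x ∈ (p i j).support → x ∈ (p k l).support → x ∈ Set.range v) :
    ∀ (a b c d : Fin T), a ≠ b → c ≠ d → ¬(a = c ∧ b = d) → ¬(a = d ∧ b = c) →
      ∀ q q', 0 < q → q < (p a b).length → 0 < q' → q' < (p c d).length →
      (p a b).getVert q ≠ (p c d).getVert q' := by
  intro a b c d hab hcd hne1 hne2 q q' hq0 hql hq0' hql' heq
  have hm1 : (p a b).getVert q ∈ (p a b).support := by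
    rw [SimpleGraph.Walk.mem_support_iff_exists_getVert]
    exact ⟨q, rfl, by omega⟩
  have hm2 : (p a b).getVert q ∈ (p c d).support := by
    rw [SimpleGraph.Walk.mem_support_iff_exists_getVert]
    exact ⟨q', heq.symm, by omega⟩
  obtain ⟨k, hk⟩ := h3 a b c d hab hcd hne1 hne2 _ hm1 hm2
  exact subdiv_int_ne v p h1 h2 a b hab q hq0 hql k hk.symm

end Subdiv

/-- Classical decision function. -/
noncomputable def DD (Q : Prop) : Bool := @decide Q (Classical.propDecidable Q)

lemma DD_true {Q : Prop} : DD Q = true ↔ Q := by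
  simp [DD]

section ExtractDefs

variable {V : Type} {G : SimpleGraph V} {T : ℕ} (v : Fin T → V)
  (p : ∀ i j : Fin T, G.Walk (v i) (v j)) (ix : ℕ → Fin T)

/-- `iA a b c`: some internal vertex of path `a-b` is adjacent to principal `c`. -/
def iA (a b c : ℕ) : Prop :=
  ∃ q, 0 < q ∧ q < (p (ix a) (ix b)).length ∧ G.Adj (v (ix c)) ((p (ix a) (ix b)).getVert q)

/-- `iC a b c d`: a chord between internal vertices of paths `a-b` and `c-d`. -/
def iC (a b c d : ℕ) : Prop :=
  ∃ q q', 0 < q ∧ q < (p (ix a) (ix b)).length ∧ 0 < q' ∧ q' < (p (ix c) (ix d)).length ∧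
    G.Adj ((p (ix a) (ix b)).getVert q) ((p (ix c) (ix d)).getVert q')

end ExtractDefs

theorem extract (r t₀ n : ℕ) (ht₀ : 1 ≤ t₀) :
    ∃ T : ℕ, 1 ≤ T ∧ ∀ {V : Type} (G : SimpleGraph V), ¬ HasBiclique' G t₀ →
      ∀ (v : Fin T → V), Function.Injective v →
      ∀ (p : ∀ i j : Fin T, G.Walk (v i) (v j)),
      (∀ i j, i ≠ j → (p i j).IsPath ∧ (p i j).length ≤ r + 1) →
      (∀ i j k, i ≠ j → v k ∈ (p i j).support → k = i ∨ k = j) →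
      (∀ i j k l, i ≠ j → k ≠ l → ¬(i = k ∧ j = l) → ¬(i = l ∧ j = k) →
        ∀ x, x ∈ (p i j).support → x ∈ (p k l).support → x ∈ Set.range v) →
      ∃ s, 2 ≤ s ∧ s ≤ r + 1 ∧ Nonempty (Clean G n s) := by
  classical
  set MA := t₀ * 2 ^ (r * t₀) with hMAdef
  set m₁ := r * (t₀ - 1) + 1 with hm₁def
  set MB := t₀ * 2 ^ (r * m₁) with hMBdef
  set N := n + 4 * t₀ + 2 * MA + 4 * (m₁ + MB) + 8 with hNdef
  have hMA1 : 1 ≤ MA := Nat.le_trans ht₀ (Nat.le_mul_of_pos_right _ (Nat.pow_pos (by norm_num : (0:ℕ) < 2)))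
  have hMB1 : 1 ≤ MB := Nat.le_trans ht₀ (Nat.le_mul_of_pos_right _ (Nat.pow_pos (by norm_num : (0:ℕ) < 2)))
  obtain ⟨T2, hT2⟩ := ramsey 2 (Fin (r + 2)) N
  obtain ⟨T3, hT3⟩ := ramsey 3 (Bool × Bool × Bool × Bool × Bool × Bool) T2
  obtain ⟨T4, hT4⟩ := ramsey 4 (Bool × Bool × Bool) T3
  refine ⟨T4 + 1, by omega, ?_⟩
  intro V G hbi v hvinj p h1 h2 h3
  set ix : ℕ → Fin (T4 + 1) := fun a => ⟨min a T4, by omega⟩ with hixdef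
  have hix_lt : ∀ a, a < T4 + 1 → ((ix a : Fin (T4 + 1)) : ℕ) = a := by
    intro a ha
    simp only [hixdef]
    omega
  obtain ⟨Y4, hY4sub, hY4card, c4, hc4⟩ :=
    hT4 (fun x => (DD (iC v p ix (x 0) (x 1) (x 2) (x 3)),
      DD (iC v p ix (x 0) (x 2) (x 1) (x 3)), DD (iC v p ix (x 0) (x 3) (x 1) (x 2))))
      (Finset.range (T4 + 1)) (by rw [Finset.card_range]; omega)
  obtain ⟨Y3, hY3sub, hY3card, c3, hc3⟩ :=
    hT3 (fun x => (DD (iA v p ix (x 0) (x 1) (x 2)), DD (iA v p ix (x 0) (x 2) (x 1)),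
      DD (iA v p ix (x 1) (x 2) (x 0)), DD (iC v p ix (x 0) (x 1) (x 0) (x 2)),
      DD (iC v p ix (x 0) (x 1) (x 1) (x 2)), DD (iC v p ix (x 0) (x 2) (x 1) (x 2))))
      Y4 hY4card
  obtain ⟨Y2, hY2sub, hY2card, c2, hc2⟩ :=
    hT2 (fun x => (⟨min (p (ix (x 0)) (ix (x 1))).length (r + 1),
      Nat.lt_succ_of_le (Nat.min_le_right _ _)⟩ : Fin (r + 2))) Y3 hY3card
  obtain ⟨Y, hYsub, hYcard⟩ := Finset.exists_subset_card_eq hY2card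
  set E : ℕ → ℕ := fun a => if h : a < N then ((Y.orderIsoOfFin hYcard) ⟨a, h⟩ : ℕ) else 0
    with hEdef
  have hEY : ∀ a, a < N → E a ∈ Y := by
    intro a ha
    simp only [hEdef, dif_pos ha]
    exact ((Y.orderIsoOfFin hYcard) ⟨a, ha⟩).2
  have hEmono : ∀ a b, a < b → b < N → E a < E b := by
    intro a b hab hb
    have ha : a < N := by omega
    simp only [hEdef, dif_pos ha, dif_pos hb]
    exact Subtype.coe_lt_coe.mpr ((Y.orderIsoOfFin hYcard).strictMono
      (show (⟨a, ha⟩ : Fin N) < ⟨b, hb⟩ from hab))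
  have hEY2 : ∀ a, a < N → E a ∈ Y2 := fun a ha => hYsub (hEY a ha)
  have hEY3 : ∀ a, a < N → E a ∈ Y3 := fun a ha => hY2sub (hEY2 a ha)
  have hEY4 : ∀ a, a < N → E a ∈ Y4 := fun a ha => hY3sub (hEY3 a ha)
  have hET : ∀ a, a < N → E a < T4 + 1 := by
    intro a ha
    have := hY4sub (hEY4 a ha)
    simpa using Finset.mem_range.mp this
  have hixE : ∀ a, a < N → ((ix (E a) : Fin (T4 + 1)) : ℕ) = E a := fun a ha => hix_lt _ (hET a ha)
  have hEinj : ∀ a b, a < N → b < N → E a = E b → a = b := by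
    intro a b ha hb heq
    rcases Nat.lt_trichotomy a b with h | h | h
    · exact absurd heq (Nat.ne_of_lt (hEmono a b h hb))
    · exact h
    · exact absurd heq.symm (Nat.ne_of_lt (hEmono b a h ha))
  have hixinj : ∀ a b, a < N → b < N → ix (E a) = ix (E b) → a = b := by
    intro a b ha hb heq
    apply hEinj a b ha hb
    have := congrArg (Fin.val) heq
    rwa [hixE a ha, hixE b hb] at this
  have hixne : ∀ a b, a < b → b < N → ix (E a) ≠ ix (E b) := by
    intro a b hab hb heq
    have := hixinj a b (by omega) hb heq
    omega
  -- uniform path length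
  have hom2 : ∀ a b, a < b → b < N →
      min (p (ix (E a)) (ix (E b))).length (r + 1) = (c2 : ℕ) := by
    intro a b hab hb
    have h := hc2 ![E a, E b] (sm2 (hEmono a b hab hb)) ?_
    · exact congrArg Fin.val h
    · intro i
      fin_cases i
      · simpa using hEY2 a (by omega)
      · simpa using hEY2 b hb
  set s := (c2 : ℕ) with hsdef
  have hlen : ∀ a b, a < b → b < N → (p (ix (E a)) (ix (E b))).length = s := by
    intro a b hab hb
    have h := hom2 a b hab hb
    have hle := (h1 _ _ (hixne a b hab hb)).2
    omega
  have hsle : s ≤ r + 1 := by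
    have h := hom2 0 1 (by omega) (by omega)
    omega
  have hs1 : 1 ≤ s := by
    by_contra h
    have h0 : (p (ix (E 0)) (ix (E 1))).length = 0 := by
      have := hlen 0 1 (by omega) (by omega)
      omega
    have := SimpleGraph.Walk.eq_of_length_eq_zero h0
    exact hixne 0 1 (by omega) (by omega) (hvinj this)
  -- homogeneity for triples and quadruples
  have hom3 : ∀ a b c, a < b → b < c → c < N →
      (DD (iA v p ix (E a) (E b) (E c)), DD (iA v p ix (E a) (E c) (E b)),
       DD (iA v p ix (E b) (E c) (E a)), DD (iC v p ix (E a) (E b) (E a) (E c)),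
       DD (iC v p ix (E a) (E b) (E b) (E c)), DD (iC v p ix (E a) (E c) (E b) (E c))) = c3 := by
    intro a b c hab hbc hc
    have h := hc3 ![E a, E b, E c]
      (sm3 (hEmono a b hab (by omega)) (hEmono b c hbc hc)) ?_
    · exact h
    · intro i
      fin_cases i
      · simpa using hEY3 a (by omega)
      · simpa using hEY3 b (by omega)
      · simpa using hEY3 c hc
  have hom4 : ∀ a b c d, a < b → b < c → c < d → d < N →
      (DD (iC v p ix (E a) (E b) (E c) (E d)), DD (iC v p ix (E a) (E c) (E b) (E d)),
       DD (iC v p ix (E a) (E d) (E b) (E c))) = c4 := by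
    intro a b c d hab hbc hcd hd
    have h := hc4 ![E a, E b, E c, E d]
      (sm4 (hEmono a b hab (by omega)) (hEmono b c hbc (by omega)) (hEmono c d hcd hd)) ?_
    · exact h
    · intro i
      fin_cases i
      · simpa using hEY4 a (by omega)
      · simpa using hEY4 b (by omega)
      · simpa using hEY4 c (by omega)
      · simpa using hEY4 d hd
  -- block helpers
  have hBLKcard : ∀ a b, a < b → b < N →
      (intFinset (p (ix (E a)) (ix (E b)))).card ≤ r :=
    fun a b hab hb => intFinset_card_le (h1 _ _ (hixne a b hab hb)).2
  have h1' : ∀ (i j : Fin (T4 + 1)), i ≠ j → (p i j).IsPath := fun i j h => (h1 i j h).1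
  have hBLKdisj : ∀ a b c d, a < b → b < N → c < d → d < N → (a ≠ c ∨ b ≠ d) →
      ∀ x ∈ intFinset (p (ix (E a)) (ix (E b))), x ∉ intFinset (p (ix (E c)) (ix (E d))) := by
    intro a b c d hab hb hcd hd hne x hx hx'
    obtain ⟨q, hq0, hql, hqe⟩ := mem_intFinset.mp hx
    obtain ⟨q', hq0', hql', hqe'⟩ := mem_intFinset.mp hx'
    refine subdiv_disj v p h1' h2 h3 (ix (E a)) (ix (E b)) (ix (E c)) (ix (E d))
      (hixne a b hab hb) (hixne c d hcd hd) ?_ ?_ q q' hq0 hql hq0' hql'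
      (hqe.trans hqe'.symm)
    · rintro ⟨e1, e2⟩
      have := hixinj a c (by omega) (by omega) e1
      have := hixinj b d hb hd e2
      omega
    · rintro ⟨e1, e2⟩
      have := hixinj a d (by omega) hd e1
      have := hixinj b c hb (by omega) e2
      omega
  have hxsinj : ∀ (lo cnt : ℕ), lo + cnt ≤ N →
      Function.Injective (fun q : Fin cnt => v (ix (E (lo + (q : ℕ))))) := by
    intro lo cnt hle q q' heq
    have := hixinj (lo + q) (lo + q') (by omega) (by omega) (hvinj heq)
    exact Fin.ext (by omega)
  have hxscard : ∀ (lo cnt : ℕ), lo + cnt ≤ N →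
      (Finset.univ.image (fun q : Fin cnt => v (ix (E (lo + (q : ℕ)))))).card = cnt := by
    intro lo cnt hle
    rw [Finset.card_image_of_injective _ (hxsinj lo cnt hle), Finset.card_univ,
      Fintype.card_fin]
  -- no principal-internal chords (three patterns)
  have hA : ∀ a b c, a < b → b < c → c < N → ¬ iA v p ix (E a) (E b) (E c) := by
    intro a b c hab hbc hc hadj
    apply hbi
    have ht : c3.1 = true := by
      have h := congrArg (fun z : Bool×Bool×Bool×Bool×Bool×Bool => z.1) (hom3 a b c hab hbc hc)
      have h' : DD (iA v p ix (E a) (E b) (E c)) = c3.1 := h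
      rw [← h']
      exact DD_true.mpr hadj
    have hall : ∀ a' b' c', a' < b' → b' < c' → c' < N → iA v p ix (E a') (E b') (E c') := by
      intro a' b' c' h1'' h2'' h3''
      have h := congrArg (fun z : Bool×Bool×Bool×Bool×Bool×Bool => z.1) (hom3 a' b' c' h1'' h2'' h3'')
      have h' : DD (iA v p ix (E a') (E b') (E c')) = c3.1 := h
      rw [ht] at h'
      exact DD_true.mp h'
    apply configA G t₀ r ht₀
      (fun l : Fin t₀ => intFinset (p (ix (E (2 * (l : ℕ)))) (ix (E (2 * (l : ℕ) + 1)))))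
      (fun l => hBLKcard _ _ (by omega) (by have := l.isLt; omega))
      ?_ (Finset.univ.image (fun q : Fin MA => v (ix (E (2 * t₀ + (q : ℕ)))))) ?_ ?_
    · intro l l' hne x hx
      refine hBLKdisj _ _ _ _ (by omega) (by have := l.isLt; omega) (by omega)
        (by have := l'.isLt; omega) ?_ x hx
      left
      intro heq
      exact hne (Fin.ext (by omega))
    · rw [hxscard (2 * t₀) MA (by omega)]
    · intro x hx l
      obtain ⟨q, _, rfl⟩ := Finset.mem_image.mp hx
      obtain ⟨q0, hq0, hql, hadj'⟩ := hall (2 * (l : ℕ)) (2 * (l : ℕ) + 1) (2 * t₀ + (q : ℕ))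
        (by omega) (by have := l.isLt; omega) (by have := q.isLt; omega)
      exact ⟨_, mem_intFinset.mpr ⟨q0, hq0, hql, rfl⟩, hadj'⟩
  have hB : ∀ a b c, a < b → b < c → c < N → ¬ iA v p ix (E a) (E c) (E b) := by
    intro a b c hab hbc hc hadj
    apply hbi
    have ht : c3.2.1 = true := by
      have h : DD (iA v p ix (E a) (E c) (E b)) = c3.2.1 :=
        congrArg (fun z : Bool×Bool×Bool×Bool×Bool×Bool => z.2.1) (hom3 a b c hab hbc hc)
      rw [← h]
      exact DD_true.mpr hadj
    have hall : ∀ a' b' c', a' < b' → b' < c' → c' < N → iA v p ix (E a') (E c') (E b') := by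
      intro a' b' c' h1'' h2'' h3''
      have h : DD (iA v p ix (E a') (E c') (E b')) = c3.2.1 :=
        congrArg (fun z : Bool×Bool×Bool×Bool×Bool×Bool => z.2.1) (hom3 a' b' c' h1'' h2'' h3'')
      rw [ht] at h
      exact DD_true.mp h
    apply configA G t₀ r ht₀
      (fun l : Fin t₀ => intFinset (p (ix (E (l : ℕ))) (ix (E (t₀ + MA + (l : ℕ))))))
      (fun l => hBLKcard _ _ (by have := l.isLt; omega) (by have := l.isLt; omega))
      ?_ (Finset.univ.image (fun q : Fin MA => v (ix (E (t₀ + (q : ℕ)))))) ?_ ?_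
    · intro l l' hne x hx
      refine hBLKdisj _ _ _ _ (by have := l.isLt; omega) (by have := l.isLt; omega)
        (by have := l'.isLt; omega) (by have := l'.isLt; omega) ?_ x hx
      left
      intro heq
      exact hne (Fin.ext (by omega))
    · rw [hxscard t₀ MA (by omega)]
    · intro x hx l
      obtain ⟨q, _, rfl⟩ := Finset.mem_image.mp hx
      obtain ⟨q0, hq0, hql, hadj'⟩ := hall (l : ℕ) (t₀ + (q : ℕ)) (t₀ + MA + (l : ℕ))
        (by have := l.isLt; omega) (by have := q.isLt; omega) (by have := l.isLt; omega)
      exact ⟨_, mem_intFinset.mpr ⟨q0, hq0, hql, rfl⟩, hadj'⟩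
  have hC : ∀ a b c, a < b → b < c → c < N → ¬ iA v p ix (E b) (E c) (E a) := by
    intro a b c hab hbc hc hadj
    apply hbi
    have ht : c3.2.2.1 = true := by
      have h : DD (iA v p ix (E b) (E c) (E a)) = c3.2.2.1 :=
        congrArg (fun z : Bool×Bool×Bool×Bool×Bool×Bool => z.2.2.1) (hom3 a b c hab hbc hc)
      rw [← h]
      exact DD_true.mpr hadj
    have hall : ∀ a' b' c', a' < b' → b' < c' → c' < N → iA v p ix (E b') (E c') (E a') := by
      intro a' b' c' h1'' h2'' h3''
      have h : DD (iA v p ix (E b') (E c') (E a')) = c3.2.2.1 :=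
        congrArg (fun z : Bool×Bool×Bool×Bool×Bool×Bool => z.2.2.1) (hom3 a' b' c' h1'' h2'' h3'')
      rw [ht] at h
      exact DD_true.mp h
    apply configA G t₀ r ht₀
      (fun l : Fin t₀ => intFinset (p (ix (E (MA + 2 * (l : ℕ)))) (ix (E (MA + 2 * (l : ℕ) + 1)))))
      (fun l => hBLKcard _ _ (by omega) (by have := l.isLt; omega))
      ?_ (Finset.univ.image (fun q : Fin MA => v (ix (E (0 + (q : ℕ)))))) ?_ ?_
    · intro l l' hne x hx
      refine hBLKdisj _ _ _ _ (by omega) (by have := l.isLt; omega) (by omega)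
        (by have := l'.isLt; omega) ?_ x hx
      left
      intro heq
      exact hne (Fin.ext (by omega))
    · rw [hxscard 0 MA (by omega)]
    · intro x hx l
      obtain ⟨q, _, rfl⟩ := Finset.mem_image.mp hx
      obtain ⟨q0, hq0, hql, hadj'⟩ := hall (0 + (q : ℕ)) (MA + 2 * (l : ℕ)) (MA + 2 * (l : ℕ) + 1)
        (by have := q.isLt; omega) (by omega) (by have := l.isLt; omega)
      exact ⟨_, mem_intFinset.mpr ⟨q0, hq0, hql, rfl⟩, hadj'⟩
  -- symmetry of chords
  have hCsymm : ∀ a b c d : ℕ, iC v p ix a b c d → iC v p ix c d a b := by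
    rintro a b c d ⟨q, q', hq1, hq2, hq3, hq4, hq5⟩
    exact ⟨q', q, hq3, hq4, hq1, hq2, hq5.symm⟩
  -- the six chord patterns
  have hDl : ∀ a b c, a < b → b < c → c < N → ¬ iC v p ix (E a) (E b) (E a) (E c) := by
    intro a b c hab hbc hc hch
    apply hbi
    have ht : c3.2.2.2.1 = true := by
      have h : DD (iC v p ix (E a) (E b) (E a) (E c)) = c3.2.2.2.1 :=
        congrArg (fun z : Bool×Bool×Bool×Bool×Bool×Bool => z.2.2.2.1) (hom3 a b c hab hbc hc)
      rw [← h]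
      exact DD_true.mpr hch
    have hall : ∀ a' b' c', a' < b' → b' < c' → c' < N →
        iC v p ix (E a') (E b') (E a') (E c') := by
      intro a' b' c' ha' hb' hc'
      have h : DD (iC v p ix (E a') (E b') (E a') (E c')) = c3.2.2.2.1 :=
        congrArg (fun z : Bool×Bool×Bool×Bool×Bool×Bool => z.2.2.2.1) (hom3 a' b' c' ha' hb' hc')
      rw [ht] at h
      exact DD_true.mp h
    apply configB G t₀ r m₁ MB ht₀ (by omega)
      (fun j : Fin m₁ => intFinset (p (ix (E 0)) (ix (E (1 + (j : ℕ))))))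
      (fun l : Fin MB => intFinset (p (ix (E 0)) (ix (E (1 + m₁ + (l : ℕ))))))
      (fun j => hBLKcard _ _ (by omega) (by have := j.isLt; omega))
      (fun l => hBLKcard _ _ (by omega) (by have := l.isLt; omega))
      ?_ ?_ hMBdef.ge ?_
    · intro j j' hne x hx
      exact hBLKdisj _ _ _ _ (by omega) (by have := j.isLt; omega) (by omega)
        (by have := j'.isLt; omega)
        (Or.inr (fun heq => hne (Fin.ext (by omega)))) x hx
    · intro l l' hne x hx
      exact hBLKdisj _ _ _ _ (by omega) (by have := l.isLt; omega) (by omega)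
        (by have := l'.isLt; omega)
        (Or.inr (fun heq => hne (Fin.ext (by omega)))) x hx
    · intro j l
      obtain ⟨q, q', h1a, h2a, h3a, h4a, h5a⟩ := hall 0 (1 + (j : ℕ)) (1 + m₁ + (l : ℕ))
        (by omega) (by have := j.isLt; omega) (by have := l.isLt; omega)
      exact ⟨_, mem_intFinset.mpr ⟨q, h1a, h2a, rfl⟩, _,
        mem_intFinset.mpr ⟨q', h3a, h4a, rfl⟩, h5a⟩
  have hEm : ∀ a b c, a < b → b < c → c < N → ¬ iC v p ix (E a) (E b) (E b) (E c) := by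
    intro a b c hab hbc hc hch
    apply hbi
    have ht : c3.2.2.2.2.1 = true := by
      have h : DD (iC v p ix (E a) (E b) (E b) (E c)) = c3.2.2.2.2.1 :=
        congrArg (fun z : Bool×Bool×Bool×Bool×Bool×Bool => z.2.2.2.2.1) (hom3 a b c hab hbc hc)
      rw [← h]
      exact DD_true.mpr hch
    have hall : ∀ a' b' c', a' < b' → b' < c' → c' < N →
        iC v p ix (E a') (E b') (E b') (E c') := by
      intro a' b' c' ha' hb' hc'
      have h : DD (iC v p ix (E a') (E b') (E b') (E c')) = c3.2.2.2.2.1 :=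
        congrArg (fun z : Bool×Bool×Bool×Bool×Bool×Bool => z.2.2.2.2.1) (hom3 a' b' c' ha' hb' hc')
      rw [ht] at h
      exact DD_true.mp h
    apply configB G t₀ r m₁ MB ht₀ (by omega)
      (fun j : Fin m₁ => intFinset (p (ix (E (j : ℕ))) (ix (E m₁))))
      (fun l : Fin MB => intFinset (p (ix (E m₁)) (ix (E (m₁ + 1 + (l : ℕ))))))
      (fun j => hBLKcard _ _ (by have := j.isLt; omega) (by omega))
      (fun l => hBLKcard _ _ (by omega) (by have := l.isLt; omega))
      ?_ ?_ hMBdef.ge ?_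
    · intro j j' hne x hx
      exact hBLKdisj _ _ _ _ (by have := j.isLt; omega) (by omega)
        (by have := j'.isLt; omega) (by omega)
        (Or.inl (fun heq => hne (Fin.ext (by omega)))) x hx
    · intro l l' hne x hx
      exact hBLKdisj _ _ _ _ (by omega) (by have := l.isLt; omega) (by omega)
        (by have := l'.isLt; omega)
        (Or.inr (fun heq => hne (Fin.ext (by omega)))) x hx
    · intro j l
      obtain ⟨q, q', h1a, h2a, h3a, h4a, h5a⟩ := hall (j : ℕ) m₁ (m₁ + 1 + (l : ℕ))
        (by have := j.isLt; omega) (by omega) (by have := l.isLt; omega)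
      exact ⟨_, mem_intFinset.mpr ⟨q, h1a, h2a, rfl⟩, _,
        mem_intFinset.mpr ⟨q', h3a, h4a, rfl⟩, h5a⟩
  have hFh : ∀ a b c, a < b → b < c → c < N → ¬ iC v p ix (E a) (E c) (E b) (E c) := by
    intro a b c hab hbc hc hch
    apply hbi
    have ht : c3.2.2.2.2.2 = true := by
      have h : DD (iC v p ix (E a) (E c) (E b) (E c)) = c3.2.2.2.2.2 :=
        congrArg (fun z : Bool×Bool×Bool×Bool×Bool×Bool => z.2.2.2.2.2) (hom3 a b c hab hbc hc)
      rw [← h]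
      exact DD_true.mpr hch
    have hall : ∀ a' b' c', a' < b' → b' < c' → c' < N →
        iC v p ix (E a') (E c') (E b') (E c') := by
      intro a' b' c' ha' hb' hc'
      have h : DD (iC v p ix (E a') (E c') (E b') (E c')) = c3.2.2.2.2.2 :=
        congrArg (fun z : Bool×Bool×Bool×Bool×Bool×Bool => z.2.2.2.2.2) (hom3 a' b' c' ha' hb' hc')
      rw [ht] at h
      exact DD_true.mp h
    apply configB G t₀ r m₁ MB ht₀ (by omega)
      (fun j : Fin m₁ => intFinset (p (ix (E (j : ℕ))) (ix (E (m₁ + MB)))))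
      (fun l : Fin MB => intFinset (p (ix (E (m₁ + (l : ℕ)))) (ix (E (m₁ + MB)))))
      (fun j => hBLKcard _ _ (by have := j.isLt; omega) (by omega))
      (fun l => hBLKcard _ _ (by have := l.isLt; omega) (by omega))
      ?_ ?_ hMBdef.ge ?_
    · intro j j' hne x hx
      exact hBLKdisj _ _ _ _ (by have := j.isLt; omega) (by omega)
        (by have := j'.isLt; omega) (by omega)
        (Or.inl (fun heq => hne (Fin.ext (by omega)))) x hx
    · intro l l' hne x hx
      exact hBLKdisj _ _ _ _ (by have := l.isLt; omega) (by omega)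
        (by have := l'.isLt; omega) (by omega)
        (Or.inl (fun heq => hne (Fin.ext (by omega)))) x hx
    · intro j l
      obtain ⟨q, q', h1a, h2a, h3a, h4a, h5a⟩ := hall (j : ℕ) (m₁ + (l : ℕ)) (m₁ + MB)
        (by have := j.isLt; omega) (by have := l.isLt; omega) (by omega)
      exact ⟨_, mem_intFinset.mpr ⟨q, h1a, h2a, rfl⟩, _,
        mem_intFinset.mpr ⟨q', h3a, h4a, rfl⟩, h5a⟩
  have hP1 : ∀ a b c d, a < b → b < c → c < d → d < N →
      ¬ iC v p ix (E a) (E b) (E c) (E d) := by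
    intro a b c d hab hbc hcd hd hch
    apply hbi
    have ht : c4.1 = true := by
      have h : DD (iC v p ix (E a) (E b) (E c) (E d)) = c4.1 :=
        congrArg (fun z : Bool×Bool×Bool => z.1) (hom4 a b c d hab hbc hcd hd)
      rw [← h]
      exact DD_true.mpr hch
    have hall : ∀ a' b' c' d', a' < b' → b' < c' → c' < d' → d' < N →
        iC v p ix (E a') (E b') (E c') (E d') := by
      intro a' b' c' d' h1a h2a h3a h4a
      have h : DD (iC v p ix (E a') (E b') (E c') (E d')) = c4.1 :=
        congrArg (fun z : Bool×Bool×Bool => z.1) (hom4 a' b' c' d' h1a h2a h3a h4a)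
      rw [ht] at h
      exact DD_true.mp h
    apply configB G t₀ r m₁ MB ht₀ (by omega)
      (fun j : Fin m₁ => intFinset (p (ix (E (2 * (j : ℕ)))) (ix (E (2 * (j : ℕ) + 1)))))
      (fun l : Fin MB => intFinset
        (p (ix (E (2 * m₁ + 2 * (l : ℕ)))) (ix (E (2 * m₁ + 2 * (l : ℕ) + 1)))))
      (fun j => hBLKcard _ _ (by omega) (by have := j.isLt; omega))
      (fun l => hBLKcard _ _ (by omega) (by have := l.isLt; omega))
      ?_ ?_ hMBdef.ge ?_
    · intro j j' hne x hx
      exact hBLKdisj _ _ _ _ (by omega) (by have := j.isLt; omega) (by omega)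
        (by have := j'.isLt; omega)
        (Or.inl (fun heq => hne (Fin.ext (by omega)))) x hx
    · intro l l' hne x hx
      exact hBLKdisj _ _ _ _ (by omega) (by have := l.isLt; omega) (by omega)
        (by have := l'.isLt; omega)
        (Or.inl (fun heq => hne (Fin.ext (by omega)))) x hx
    · intro j l
      obtain ⟨q, q', h1a, h2a, h3a, h4a, h5a⟩ := hall (2 * (j : ℕ)) (2 * (j : ℕ) + 1)
        (2 * m₁ + 2 * (l : ℕ)) (2 * m₁ + 2 * (l : ℕ) + 1)
        (by omega) (by have := j.isLt; omega) (by omega) (by have := l.isLt; omega)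
      exact ⟨_, mem_intFinset.mpr ⟨q, h1a, h2a, rfl⟩, _,
        mem_intFinset.mpr ⟨q', h3a, h4a, rfl⟩, h5a⟩
  have hP2 : ∀ a b c d, a < b → b < c → c < d → d < N →
      ¬ iC v p ix (E a) (E c) (E b) (E d) := by
    intro a b c d hab hbc hcd hd hch
    apply hbi
    have ht : c4.2.1 = true := by
      have h : DD (iC v p ix (E a) (E c) (E b) (E d)) = c4.2.1 :=
        congrArg (fun z : Bool×Bool×Bool => z.2.1) (hom4 a b c d hab hbc hcd hd)
      rw [← h]
      exact DD_true.mpr hch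
    have hall : ∀ a' b' c' d', a' < b' → b' < c' → c' < d' → d' < N →
        iC v p ix (E a') (E c') (E b') (E d') := by
      intro a' b' c' d' h1a h2a h3a h4a
      have h : DD (iC v p ix (E a') (E c') (E b') (E d')) = c4.2.1 :=
        congrArg (fun z : Bool×Bool×Bool => z.2.1) (hom4 a' b' c' d' h1a h2a h3a h4a)
      rw [ht] at h
      exact DD_true.mp h
    apply configB G t₀ r m₁ MB ht₀ (by omega)
      (fun j : Fin m₁ => intFinset (p (ix (E (j : ℕ))) (ix (E (m₁ + MB + (j : ℕ))))))
      (fun l : Fin MB => intFinset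
        (p (ix (E (m₁ + (l : ℕ)))) (ix (E (m₁ + MB + m₁ + (l : ℕ))))))
      (fun j => hBLKcard _ _ (by have := j.isLt; omega) (by have := j.isLt; omega))
      (fun l => hBLKcard _ _ (by have := l.isLt; omega) (by have := l.isLt; omega))
      ?_ ?_ hMBdef.ge ?_
    · intro j j' hne x hx
      exact hBLKdisj _ _ _ _ (by have := j.isLt; omega) (by have := j.isLt; omega)
        (by have := j'.isLt; omega) (by have := j'.isLt; omega)
        (Or.inl (fun heq => hne (Fin.ext (by omega)))) x hx
    · intro l l' hne x hx
      exact hBLKdisj _ _ _ _ (by have := l.isLt; omega) (by have := l.isLt; omega)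
        (by have := l'.isLt; omega) (by have := l'.isLt; omega)
        (Or.inl (fun heq => hne (Fin.ext (by omega)))) x hx
    · intro j l
      obtain ⟨q, q', h1a, h2a, h3a, h4a, h5a⟩ := hall (j : ℕ) (m₁ + (l : ℕ))
        (m₁ + MB + (j : ℕ)) (m₁ + MB + m₁ + (l : ℕ))
        (by have := j.isLt; omega) (by have := l.isLt; omega)
        (by have := j.isLt; omega) (by have := l.isLt; omega)
      exact ⟨_, mem_intFinset.mpr ⟨q, h1a, h2a, rfl⟩, _,
        mem_intFinset.mpr ⟨q', h3a, h4a, rfl⟩, h5a⟩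
  have hP3 : ∀ a b c d, a < b → b < c → c < d → d < N →
      ¬ iC v p ix (E a) (E d) (E b) (E c) := by
    intro a b c d hab hbc hcd hd hch
    apply hbi
    have ht : c4.2.2 = true := by
      have h : DD (iC v p ix (E a) (E d) (E b) (E c)) = c4.2.2 :=
        congrArg (fun z : Bool×Bool×Bool => z.2.2) (hom4 a b c d hab hbc hcd hd)
      rw [← h]
      exact DD_true.mpr hch
    have hall : ∀ a' b' c' d', a' < b' → b' < c' → c' < d' → d' < N →
        iC v p ix (E a') (E d') (E b') (E c') := by
      intro a' b' c' d' h1a h2a h3a h4a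
      have h : DD (iC v p ix (E a') (E d') (E b') (E c')) = c4.2.2 :=
        congrArg (fun z : Bool×Bool×Bool => z.2.2) (hom4 a' b' c' d' h1a h2a h3a h4a)
      rw [ht] at h
      exact DD_true.mp h
    apply configB G t₀ r m₁ MB ht₀ (by omega)
      (fun j : Fin m₁ => intFinset
        (p (ix (E (j : ℕ))) (ix (E (2 * (m₁ + MB) - 1 - (j : ℕ))))))
      (fun l : Fin MB => intFinset
        (p (ix (E (m₁ + (l : ℕ)))) (ix (E (2 * (m₁ + MB) - 1 - m₁ - (l : ℕ))))))
      (fun j => hBLKcard _ _ (by have := j.isLt; omega) (by omega))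
      (fun l => hBLKcard _ _ (by have := l.isLt; omega) (by omega))
      ?_ ?_ hMBdef.ge ?_
    · intro j j' hne x hx
      exact hBLKdisj _ _ _ _ (by have := j.isLt; omega) (by omega)
        (by have := j'.isLt; omega) (by omega)
        (Or.inl (fun heq => hne (Fin.ext (by omega)))) x hx
    · intro l l' hne x hx
      exact hBLKdisj _ _ _ _ (by have := l.isLt; omega) (by omega)
        (by have := l'.isLt; omega) (by omega)
        (Or.inl (fun heq => hne (Fin.ext (by omega)))) x hx
    · intro j l
      obtain ⟨q, q', h1a, h2a, h3a, h4a, h5a⟩ := hall (j : ℕ) (m₁ + (l : ℕ))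
        (2 * (m₁ + MB) - 1 - m₁ - (l : ℕ)) (2 * (m₁ + MB) - 1 - (j : ℕ))
        (by have := j.isLt; omega) (by have := l.isLt; have := j.isLt; omega)
        (by have := l.isLt; have := j.isLt; omega) (by omega)
      exact ⟨_, mem_intFinset.mpr ⟨q, h1a, h2a, rfl⟩, _,
        mem_intFinset.mpr ⟨q', h3a, h4a, rfl⟩, h5a⟩
  -- consolidated no-chord lemmas
  have hnoC' : ∀ a b c d, a < b → b < N → c < d → d < N →
      (a < c ∨ (a = c ∧ b < d)) → ¬ iC v p ix (E a) (E b) (E c) (E d) := by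
    intro a b c d hab hb hcd hd hlex
    rcases hlex with h | ⟨rfl, hbd⟩
    · rcases Nat.lt_trichotomy b c with hbc | rfl | hbc
      · exact hP1 a b c d hab hbc hcd hd
      · exact hEm a b d hab hcd hd
      · rcases Nat.lt_trichotomy b d with hbd | rfl | hbd
        · exact hP2 a c b d h hbc hbd hd
        · exact hFh a c b h hbc hb
        · exact hP3 a c d b h hcd hbd hb
    · exact hDl a b d hab hbd hd
  have hnoC : ∀ a b c d, a < b → b < N → c < d → d < N → (a ≠ c ∨ b ≠ d) →
      ¬ iC v p ix (E a) (E b) (E c) (E d) := by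
    intro a b c d hab hb hcd hd hne hch
    rcases Nat.lt_trichotomy a c with h | rfl | h
    · exact hnoC' a b c d hab hb hcd hd (Or.inl h) hch
    · rcases Nat.lt_trichotomy b d with h' | rfl | h'
      · exact hnoC' a b a d hab hb hcd hd (Or.inr ⟨rfl, h'⟩) hch
      · rcases hne with h'' | h'' <;> exact h'' rfl
      · exact hnoC' a d a b hcd hd hab hb (Or.inr ⟨rfl, h'⟩) (hCsymm _ _ _ _ hch)
    · exact hnoC' c d a b hcd hd hab hb (Or.inl h) (hCsymm _ _ _ _ hch)
  have hnoA : ∀ a b c, a < b → b < N → c < N → c ≠ a → c ≠ b →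
      ¬ iA v p ix (E a) (E b) (E c) := by
    intro a b c hab hb hc hca hcb
    rcases Nat.lt_trichotomy c a with h | rfl | h
    · exact hC c a b h hab hb
    · exact absurd rfl hca
    · rcases Nat.lt_trichotomy c b with h' | rfl | h'
      · exact hB a c b h h' hb
      · exact absurd rfl hcb
      · exact hA a b c hab h' hc
  -- dispatch on the uniform length
  rcases Nat.lt_or_ge s 2 with hs2 | hs2
  · -- s = 1 : the principals form a clique, contradiction
    exfalso
    apply hbi
    have hadj1 : ∀ a b, a < b → b < N → G.Adj (v (ix (E a))) (v (ix (E b))) := by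
      intro a b hab hb
      have hl := hlen a b hab hb
      have h01 : (p (ix (E a)) (ix (E b))).length = 1 := by omega
      have hone := SimpleGraph.Walk.adj_getVert_succ (p (ix (E a)) (ix (E b)))
        (i := 0) (by omega)
      rw [SimpleGraph.Walk.getVert_zero] at hone
      have hv1 : (p (ix (E a)) (ix (E b))).getVert 1 = v (ix (E b)) := by
        rw [← h01]
        exact SimpleGraph.Walk.getVert_length _
      rwa [hv1] at hone
    apply biclique_of_finsets G t₀
      (Finset.univ.image (fun q : Fin t₀ => v (ix (E (0 + (q : ℕ))))))
      (Finset.univ.image (fun q : Fin t₀ => v (ix (E (t₀ + (q : ℕ))))))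
      (hxscard 0 t₀ (by omega)) (hxscard t₀ t₀ (by omega))
    intro x hx y hy
    obtain ⟨l, _, rfl⟩ := Finset.mem_image.mp hx
    obtain ⟨l', _, rfl⟩ := Finset.mem_image.mp hy
    exact hadj1 (0 + (l : ℕ)) (t₀ + (l' : ℕ)) (by have := l.isLt; omega)
      (by have := l'.isLt; omega)
  · -- s ≥ 2 : build the clean system
    refine ⟨s, hs2, hsle, ⟨?_⟩⟩
    refine ⟨fun i => v (ix (E (i : ℕ))), ?_,
      fun i j => p (ix (E (i : ℕ))) (ix (E (j : ℕ))),
      fun i j hij => hlen _ _ hij (by have := j.isLt; omega),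
      fun i j hij => (h1 _ _ (hixne _ _ hij (by have := j.isLt; omega))).1,
      ?_, ?_, ?_, ?_⟩
    · intro i j heq
      exact Fin.ext (hixinj _ _ (by have := i.isLt; omega) (by have := j.isLt; omega)
        (hvinj heq))
    · intro i j hij q hq0 hqs k
      have hl := hlen (i : ℕ) (j : ℕ) hij (by have := j.isLt; omega)
      exact subdiv_int_ne v p h1' h2 _ _ (hixne _ _ hij (by have := j.isLt; omega))
        q hq0 (by omega) _
    · intro i j i' j' hij hij' hne q q' hq0 hqs hq0' hqs'
      have hl := hlen (i : ℕ) (j : ℕ) hij (by have := j.isLt; omega)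
      have hl' := hlen (i' : ℕ) (j' : ℕ) hij' (by have := j'.isLt; omega)
      refine subdiv_disj v p h1' h2 h3 _ _ _ _
        (hixne _ _ hij (by have := j.isLt; omega))
        (hixne _ _ hij' (by have := j'.isLt; omega)) ?_ ?_
        q q' hq0 (by omega) hq0' (by omega)
      · rintro ⟨e1, e2⟩
        have hii := hixinj _ _ (by have := i.isLt; omega) (by have := i'.isLt; omega) e1
        have hjj := hixinj _ _ (by have := j.isLt; omega) (by have := j'.isLt; omega) e2
        rcases hne with h | h
        · exact h (Fin.ext hii)
        · exact h (Fin.ext hjj)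
      · rintro ⟨e1, e2⟩
        have hii := hixinj _ _ (by have := i.isLt; omega) (by have := j'.isLt; omega) e1
        have hjj := hixinj _ _ (by have := j.isLt; omega) (by have := i'.isLt; omega) e2
        omega
    · intro i j k hij hki hkj q hq0 hqs hadj
      have hl := hlen (i : ℕ) (j : ℕ) hij (by have := j.isLt; omega)
      exact hnoA (i : ℕ) (j : ℕ) (k : ℕ) hij (by have := j.isLt; omega)
        (by have := k.isLt; omega) (fun h => hki (Fin.ext h)) (fun h => hkj (Fin.ext h))
        ⟨q, hq0, by omega, hadj⟩
    · intro i j i' j' hij hij' hne q q' hq0 hqs hq0' hqs' hadj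
      have hl := hlen (i : ℕ) (j : ℕ) hij (by have := j.isLt; omega)
      have hl' := hlen (i' : ℕ) (j' : ℕ) hij' (by have := j'.isLt; omega)
      refine hnoC (i : ℕ) (j : ℕ) (i' : ℕ) (j' : ℕ) hij (by have := j.isLt; omega)
        hij' (by have := j'.isLt; omega) ?_
        ⟨q, q', hq0, by omega, hq0', by omega, hadj⟩
      rcases hne with h | h
      · exact Or.inl (fun hh => h (Fin.ext hh))
      · exact Or.inr (fun hh => h (Fin.ext hh))


abbrev L2 : Language := Language.graph.sum MS.unaryLang

def xT {n : ℕ} : L2.Term ((Fin 1 ⊕ Fin 1) ⊕ Fin n) := Term.var (Sum.inl (Sum.inl 0))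
def yT {n : ℕ} : L2.Term ((Fin 1 ⊕ Fin 1) ⊕ Fin n) := Term.var (Sum.inl (Sum.inr 0))
def zT {n : ℕ} (q : Fin n) : L2.Term ((Fin 1 ⊕ Fin 1) ⊕ Fin n) := Term.var (Sum.inr q)

def adjF {n : ℕ} (t₁ t₂ : L2.Term ((Fin 1 ⊕ Fin 1) ⊕ Fin n)) :
    L2.BoundedFormula (Fin 1 ⊕ Fin 1) n :=
  BoundedFormula.rel (Sum.inl Language.adj) ![t₁, t₂]

def predF {n : ℕ} (i : ℕ) (t : L2.Term ((Fin 1 ⊕ Fin 1) ⊕ Fin n)) :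
    L2.BoundedFormula (Fin 1 ⊕ Fin 1) n :=
  BoundedFormula.rel (Sum.inr (MS.unaryRel.pred i)) ![t]

def wT (m : ℕ) (q : Fin (m + 2)) : L2.Term ((Fin 1 ⊕ Fin 1) ⊕ Fin m) :=
  if h0 : (q : ℕ) = 0 then xT else
  if h : (q : ℕ) = m + 1 then yT else zT ⟨(q : ℕ) - 1, by have := q.isLt; omega⟩

def core (r m : ℕ) : L2.BoundedFormula (Fin 1 ⊕ Fin 1) m :=
  predF (r + m + 1) xT ⊓
    ((List.ofFn (fun q : Fin (m + 1) => adjF (wT m q.castSucc) (wT m q.succ))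
      ++ List.ofFn (fun q : Fin m => predF (q : ℕ) (zT q))).foldr (· ⊓ ·) ⊤)

def Phi (r : ℕ) : L2.Formula (Fin 1 ⊕ Fin 1) :=
  (List.ofFn (fun m : Fin r => ((core r ((m : ℕ) + 1)).exs))).foldr (· ⊔ ·) ⊥

/-- Vertex sequence along a candidate chain. -/
def WW {V : Type} (x y : V) {m : ℕ} (zs : Fin m → V) (q : Fin (m + 2)) : V :=
  if h0 : (q : ℕ) = 0 then x else
  if h : (q : ℕ) = m + 1 then y else zs ⟨(q : ℕ) - 1, by have := q.isLt; omega⟩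

section Realize

variable {V : Type} (G : SimpleGraph V) (U : ℕ → Set V)

lemma realize_wT {m : ℕ} (vv : (Fin 1 ⊕ Fin 1) → V) (xs : Fin m → V) (q : Fin (m + 2)) :
    @Term.realize L2 V (@Language.sumStructure _ _ V G.structure (MS.unaryStructure U)) _
      (Sum.elim vv xs) (wT m q) = WW (vv (Sum.inl 0)) (vv (Sum.inr 0)) xs q := by
  rw [wT, WW]
  split
  · rfl
  · split
    · rfl
    · rfl

lemma realize_foldr_sup (l : List (L2.Formula (Fin 1 ⊕ Fin 1)))
    [L2.Structure V] (vv : (Fin 1 ⊕ Fin 1) → V) :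
    (l.foldr (· ⊔ ·) ⊥).Realize vv ↔ ∃ ψ ∈ l, ψ.Realize vv := by
  induction l with
  | nil => simp [Formula.Realize]
  | cons ψ l ih =>
    simp only [List.foldr_cons, List.mem_cons]
    rw [show ((ψ ⊔ l.foldr (· ⊔ ·) ⊥ : L2.Formula (Fin 1 ⊕ Fin 1)).Realize vv) ↔
      (ψ.Realize vv ∨ (l.foldr (· ⊔ ·) ⊥ : L2.Formula (Fin 1 ⊕ Fin 1)).Realize vv)
      from BoundedFormula.realize_sup, ih]
    constructor
    · rintro (h | ⟨ψ', h1, h2⟩)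
      · exact ⟨ψ, Or.inl rfl, h⟩
      · exact ⟨ψ', Or.inr h1, h2⟩
    · rintro ⟨ψ', (rfl | h1), h2⟩
      · exact Or.inl h2
      · exact Or.inr ⟨ψ', h1, h2⟩

theorem realize_Phi_iff (r : ℕ) (vv : (Fin 1 ⊕ Fin 1) → V) :
    (@Formula.Realize L2 V (@Language.sumStructure _ _ V G.structure (MS.unaryStructure U)) _
      (Phi r) vv) ↔
    ∃ m, 1 ≤ m ∧ m ≤ r ∧ vv (Sum.inl 0) ∈ U (r + m + 1) ∧
      ∃ zs : Fin m → V,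
        (∀ q : Fin m, zs q ∈ U (q : ℕ)) ∧
        (∀ q : Fin (m + 1),
          G.Adj (WW (vv (Sum.inl 0)) (vv (Sum.inr 0)) zs q.castSucc)
            (WW (vv (Sum.inl 0)) (vv (Sum.inr 0)) zs q.succ)) := by
  letI : L2.Structure V := @Language.sumStructure _ _ V G.structure (MS.unaryStructure U)
  rw [Phi, realize_foldr_sup]
  constructor
  · rintro ⟨ψ, hmem, hψ⟩
    obtain ⟨q, hq⟩ := List.mem_ofFn.mp hmem
    subst hq
    rw [show (((core r ((q : ℕ) + 1)).exs).Realize vv) ↔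
      ∃ xs : Fin ((q : ℕ) + 1) → V, (core r ((q : ℕ) + 1)).Realize vv xs
      from BoundedFormula.realize_exs] at hψ
    obtain ⟨zs, hzs⟩ := hψ
    rw [core, BoundedFormula.realize_inf, BoundedFormula.realize_foldr_inf] at hzs
    obtain ⟨htag, hlist⟩ := hzs
    refine ⟨(q : ℕ) + 1, by omega, by have := q.isLt; omega, ?_, zs, ?_, ?_⟩
    · exact htag
    · intro q'
      have := hlist (predF (q' : ℕ) (zT q'))
        (by
          apply List.mem_append_right
          exact List.mem_ofFn.mpr ⟨q', rfl⟩)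
      exact this
    · intro q'
      have := hlist (adjF (wT ((q : ℕ) + 1) q'.castSucc) (wT ((q : ℕ) + 1) q'.succ))
        (by
          apply List.mem_append_left
          exact List.mem_ofFn.mpr ⟨q', rfl⟩)
      have h3 : G.Adj ((wT ((q : ℕ) + 1) q'.castSucc).realize (Sum.elim vv zs))
          ((wT ((q : ℕ) + 1) q'.succ).realize (Sum.elim vv zs)) := this
      rwa [realize_wT, realize_wT] at h3
  · rintro ⟨m, hm1, hmr, htag, zs, hmark, hchain⟩
    have hq : m - 1 < r := by omega
    refine ⟨(core r (((⟨m - 1, hq⟩ : Fin r) : ℕ) + 1)).exs,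
      List.mem_ofFn.mpr ⟨⟨m - 1, hq⟩, rfl⟩, ?_⟩
    have hmeq : ((⟨m - 1, hq⟩ : Fin r) : ℕ) + 1 = m := by show m - 1 + 1 = m; omega
    rw [show ((((core r (((⟨m - 1, hq⟩ : Fin r) : ℕ) + 1)).exs)).Realize vv) ↔
      ∃ xs : Fin (((⟨m - 1, hq⟩ : Fin r) : ℕ) + 1) → V,
        (core r (((⟨m - 1, hq⟩ : Fin r) : ℕ) + 1)).Realize vv xs
      from BoundedFormula.realize_exs]
    rw [hmeq]
    refine ⟨zs, ?_⟩
    rw [core, BoundedFormula.realize_inf, BoundedFormula.realize_foldr_inf]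
    constructor
    · exact htag
    · intro ψ hmem
      rcases List.mem_append.mp hmem with h | h
      · obtain ⟨q', hq'⟩ := List.mem_ofFn.mp h
        subst hq'
        show (adjF (wT m q'.castSucc) (wT m q'.succ)).Realize vv zs
        have h3 : G.Adj ((wT m q'.castSucc).realize (Sum.elim vv zs))
            ((wT m q'.succ).realize (Sum.elim vv zs)) := by
          rw [realize_wT, realize_wT]
          exact hchain q'
        exact h3
      · obtain ⟨q', hq'⟩ := List.mem_ofFn.mp h
        subst hq'
        exact hmark q'

end Realize

lemma WW_zero {V : Type} (x y : V) {m : ℕ} (zs : Fin m → V) (h : 0 < m + 2) :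
    WW x y zs ⟨0, h⟩ = x := by simp [WW]

lemma WW_last {V : Type} (x y : V) {m : ℕ} (zs : Fin m → V) (h : m + 1 < m + 2) :
    WW x y zs ⟨m + 1, h⟩ = y := by simp [WW]

lemma WW_mid {V : Type} (x y : V) {m : ℕ} (zs : Fin m → V) (q : ℕ) (h1 : 1 ≤ q)
    (h2 : q ≤ m) (h : q < m + 2) : WW x y zs ⟨q, h⟩ = zs ⟨q - 1, by omega⟩ := by
  rw [WW]
  rw [dif_neg (by simp; omega), dif_neg (by simp; omega)]

theorem pattern_main {V : Type} (G : SimpleGraph V) (r k s : ℕ) (hs2 : 2 ≤ s)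
    (hsr : s ≤ r + 1) (C : Clean G (k + 2 ^ k) s) :
    ∃ (U : ℕ → Set V) (a : Fin k → Fin 1 → V) (b : Finset (Fin k) → Fin 1 → V),
      ∀ (i : Fin k) (J : Finset (Fin k)),
        (@Formula.Realize L2 V
          (@Language.sumStructure _ _ V G.structure (MS.unaryStructure U)) _
          (Phi r) (Sum.elim (a i) (b J))) ↔ i ∈ J := by
  classical
  have hcard : Fintype.card (Finset (Fin k)) = 2 ^ k := by simp
  set enc : Finset (Fin k) → Fin (2 ^ k) :=
    fun J => Fin.cast hcard (Fintype.equivFin (Finset (Fin k)) J) with henc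
  have hencinj : Function.Injective enc := by
    intro J J' h
    apply (Fintype.equivFin (Finset (Fin k))).injective
    have := congrArg Fin.val h
    simp only [henc, Fin.coe_cast] at this
    exact Fin.ext this
  set iA : Fin k → Fin (k + 2 ^ k) := fun i => ⟨(i : ℕ), by have := i.isLt; omega⟩ with hiA
  set iB : Finset (Fin k) → Fin (k + 2 ^ k) :=
    fun J => ⟨k + (enc J : ℕ), by have := (enc J).isLt; omega⟩ with hiB
  have hAB : ∀ (i : Fin k) (J : Finset (Fin k)), ((iA i : Fin (k + 2^k)) : ℕ) < ((iB J) : ℕ) := by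
    intro i J
    simp only [hiA, hiB]
    have := i.isLt
    omega
  have hiBinj : Function.Injective iB := by
    intro J J' h
    apply hencinj
    have := congrArg Fin.val h
    simp only [hiB] at this
    exact Fin.ext (by omega)
  have hiABne : ∀ (i : Fin k) (J : Finset (Fin k)), iA i ≠ iB J := by
    intro i J h
    have := congrArg Fin.val h
    simp only [hiA, hiB] at this
    have := i.isLt
    omega
  set U : ℕ → Set V := fun t =>
    if t < r then
      {x | ∃ (i' : Fin k) (J' : Finset (Fin k)), i' ∈ J' ∧ t + 1 < s ∧
        x = (C.p (iA i') (iB J')).getVert (t + 1)}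
    else if t = r + (s - 1) + 1 then Set.univ else ∅ with hU
  refine ⟨U, fun i _ => C.v (iA i), fun J _ => C.v (iB J), ?_⟩
  intro i J
  rw [realize_Phi_iff G U r]
  simp only [Sum.elim_inl, Sum.elim_inr]
  constructor
  · rintro ⟨m, hm1, hmr, htag, zs, hmark, hchain⟩
    -- the tag pins down m = s - 1
    have hms : m = s - 1 := by
      by_contra hne
      have h2 : C.v (iA i) ∈ U (r + m + 1) := htag
      simp only [hU] at h2
      rw [if_neg (by omega), if_neg (by omega)] at h2
      exact h2
    subst hms
    -- decode the marks
    have hmark' : ∀ q : Fin (s - 1), ∃ (i' : Fin k) (J' : Finset (Fin k)),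
        i' ∈ J' ∧ (q : ℕ) + 1 < s ∧
        zs q = (C.p (iA i') (iB J')).getVert ((q : ℕ) + 1) := by
      intro q
      have h2 := hmark q
      simp only [hU] at h2
      rw [if_pos (by have := q.isLt; omega)] at h2
      exact h2
    obtain ⟨i₀, J₀, hi₀J₀, _, hz0⟩ := hmark' ⟨0, by omega⟩
    -- the first edge pins i₀ = i
    have hchain0 := hchain ⟨0, by omega⟩
    rw [show (⟨0, by omega⟩ : Fin (s - 1 + 1)).castSucc = ⟨0, by omega⟩ from rfl,
      show (⟨0, by omega⟩ : Fin (s - 1 + 1)).succ = ⟨1, by omega⟩ from rfl,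
      WW_zero, WW_mid _ _ _ 1 (by omega) (by omega)] at hchain0
    rw [show (⟨1 - 1, by omega⟩ : Fin (s-1)) = ⟨0, by omega⟩ from rfl, hz0] at hchain0
    have hii₀ : i = i₀ := by
      by_contra hne
      refine C.chord1 (iA i₀) (iB J₀) (iA i) (hAB i₀ J₀) ?_ (hiABne i J₀) 1 (by omega)
        (by omega) hchain0
      intro h
      apply hne
      have := congrArg Fin.val h
      simp only [hiA] at this
      exact Fin.ext this
    subst hii₀
    -- inductively the chain follows the path (iA i, iB J₀)
    have key : ∀ t, ∀ ht : t < s - 1,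
        zs ⟨t, ht⟩ = (C.p (iA i) (iB J₀)).getVert (t + 1) := by
      intro t
      induction t with
      | zero => intro ht; exact hz0
      | succ t ih =>
        intro ht
        have hih := ih (by omega)
        obtain ⟨i₁, J₁, hi₁J₁, _, hz1⟩ := hmark' ⟨t + 1, ht⟩
        have hchaint := hchain ⟨t + 1, by omega⟩
        rw [show (⟨t + 1, by omega⟩ : Fin (s - 1 + 1)).castSucc = ⟨t + 1, by omega⟩ from rfl,
          show (⟨t + 1, by omega⟩ : Fin (s - 1 + 1)).succ = ⟨t + 2, by omega⟩ from rfl,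
          WW_mid _ _ _ (t + 1) (by omega) (by omega),
          WW_mid _ _ _ (t + 2) (by omega) (by omega)] at hchaint
        rw [show (⟨t + 1 - 1, by omega⟩ : Fin (s-1)) = ⟨t, by omega⟩ from rfl,
          show (⟨t + 2 - 1, by omega⟩ : Fin (s-1)) = ⟨t + 1, by omega⟩ from rfl] at hchaint
        rw [hih, hz1] at hchaint
        by_cases he1 : iA i₁ = iA i
        · by_cases he2 : iB J₁ = iB J₀
          · rw [show (⟨t + 1, ht⟩ : Fin (s - 1)) = ⟨t + 1, by omega⟩ from rfl, hz1, he1, he2]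
          · exfalso
            exact C.chord2 (iA i) (iB J₀) (iA i₁) (iB J₁) (hAB i J₀) (hAB i₁ J₁)
              (Or.inr (fun h => he2 h.symm)) (t + 1) (t + 2) (by omega) (by omega)
              (by omega) (by omega) hchaint
        · exfalso
          exact C.chord2 (iA i) (iB J₀) (iA i₁) (iB J₁) (hAB i J₀) (hAB i₁ J₁)
            (Or.inl (fun h => he1 h.symm)) (t + 1) (t + 2) (by omega) (by omega)
            (by omega) (by omega) hchaint
    -- final edge pins J = J₀
    have hchainl := hchain ⟨s - 1, by omega⟩
    rw [show (⟨s - 1, by omega⟩ : Fin (s - 1 + 1)).castSucc = ⟨s - 1, by omega⟩ from rfl,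
      show (⟨s - 1, by omega⟩ : Fin (s - 1 + 1)).succ = ⟨s - 1 + 1, by omega⟩ from rfl,
      WW_mid _ _ _ (s - 1) (by omega) (by omega), WW_last] at hchainl
    rw [show (⟨s - 1 - 1, by omega⟩ : Fin (s-1)) = ⟨s - 2, by omega⟩ from rfl,
      key (s - 2) (by omega)] at hchainl
    have hJJ₀ : J = J₀ := by
      by_contra hne
      refine C.chord1 (iA i) (iB J₀) (iB J) (hAB i J₀) (fun h => hiABne i J h.symm) ?_
        (s - 2 + 1) (by omega) (by omega) hchainl.symm
      intro h
      exact hne (hiBinj h)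
    rw [hJJ₀]
    exact hi₀J₀
  · intro hiJ
    refine ⟨s - 1, by omega, by omega, ?_,
      fun q => (C.p (iA i) (iB J)).getVert ((q : ℕ) + 1), ?_, ?_⟩
    · show C.v (iA i) ∈ U (r + (s - 1) + 1)
      simp only [hU]
      rw [if_neg (by omega)]
      simp
    · intro q
      show _ ∈ U (q : ℕ)
      simp only [hU]
      rw [if_pos (by have := q.isLt; omega)]
      exact ⟨i, J, hiJ, by have := q.isLt; omega, rfl⟩
    · intro q
      have hlen := C.len (iA i) (iB J) (hAB i J)
      have hWg : ∀ t : Fin (s - 1 + 2),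
          WW (C.v (iA i)) (C.v (iB J))
            (fun q' : Fin (s-1) => (C.p (iA i) (iB J)).getVert ((q' : ℕ) + 1)) t =
          (C.p (iA i) (iB J)).getVert (t : ℕ) := by
        intro t
        rcases Nat.eq_or_lt_of_le (Nat.zero_le (t : ℕ)) with h0 | h0
        · rw [show t = ⟨0, by omega⟩ from Fin.ext h0.symm, WW_zero]
          exact (SimpleGraph.Walk.getVert_zero _).symm
        · rcases Nat.eq_or_lt_of_le (show (t : ℕ) ≤ s - 1 + 1 by have := t.isLt; omega)
            with hl | hl
          · rw [show t = ⟨s - 1 + 1, by omega⟩ from Fin.ext hl, WW_last]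
            have : (C.p (iA i) (iB J)).getVert (s - 1 + 1) = C.v (iB J) := by
              have : s - 1 + 1 = (C.p (iA i) (iB J)).length := by omega
              rw [this]
              exact SimpleGraph.Walk.getVert_length _
            exact this.symm
          · have hmid := WW_mid (C.v (iA i)) (C.v (iB J))
              (fun q' : Fin (s - 1) => (C.p (iA i) (iB J)).getVert ((q' : ℕ) + 1))
              (t : ℕ) (by omega) (by omega) t.isLt
            have hteq : (⟨(t : ℕ), t.isLt⟩ : Fin (s - 1 + 2)) = t := rfl
            rw [hteq] at hmid
            rw [hmid]
            show (C.p (iA i) (iB J)).getVert ((t : ℕ) - 1 + 1) = _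
            congr 1
            omega
      rw [hWg, hWg]
      have hcs : ((q.castSucc : Fin (s - 1 + 2)) : ℕ) = (q : ℕ) := rfl
      have hsc : ((q.succ : Fin (s - 1 + 2)) : ℕ) = (q : ℕ) + 1 := rfl
      rw [hcs, hsc]
      exact SimpleGraph.Walk.adj_getVert_succ _ (by rw [hlen]; have := q.isLt; omega)



theorem main_helper
    (C : Set (Σ V : Type, SimpleGraph V))
    (hws : ∃ t : ℕ, ∀ G ∈ C, ¬ MS.HasBiclique G.2 t)
    (hdep : MS.MonDepClass Language.graph
      ((fun G : Σ V : Type, SimpleGraph V =>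
        (⟨G.1, G.2.structure⟩ : Σ N : Type, Language.graph.Structure N)) '' C))
    (r : ℕ) : ∃ t : ℕ, ∀ G ∈ C, ¬ MS.HasSubdivClique G.2 r t := by
  by_contra hcon
  push_neg at hcon
  obtain ⟨t₀, ht₀⟩ := hws
  have ht₀1 : 1 ≤ t₀ := by
    by_contra h
    have ht0 : t₀ = 0 := by omega
    subst ht0
    obtain ⟨G, hGC, _⟩ := hcon 1
    apply ht₀ G hGC
    refine ⟨fun x => x.elim (fun i => i.elim0) (fun i => i.elim0), ?_, ?_⟩
    · intro a b hab
      rcases a with i | i <;> exact i.elim0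
    · intro i j
      exact i.elim0
  apply hdep
  refine ⟨1, 1, Phi r, ?_⟩
  intro k
  obtain ⟨T, hT1, hext⟩ := extract r t₀ (k + 2 ^ k) ht₀1
  obtain ⟨G, hGC, hsub⟩ := hcon T
  obtain ⟨v, hvinj, pw, hp1, hp2, hp3⟩ := hsub
  have hnb : ¬ HasBiclique' G.2 t₀ := ht₀ G hGC
  obtain ⟨s, hs2, hsr, ⟨Cln⟩⟩ := hext G.2 hnb v hvinj pw hp1 hp2 hp3
  obtain ⟨U, a, b, hiff⟩ := pattern_main G.2 r k s hs2 hsr Cln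
  exact ⟨⟨G.1, G.2.structure⟩, Set.mem_image_of_mem _ hGC, U, a, b, fun i J => hiff i J⟩

end MSAux

/-- Every weakly sparse, monadically dependent class of graphs is
nowhere dense. -/
theorem weakly_sparse_dependent_implies_nowhere_dense
    (C : Set (Σ V : Type, SimpleGraph V))
    (hws : ∃ t : ℕ, ∀ G ∈ C, ¬ MS.HasBiclique G.2 t)
    (hdep : MS.MonDepClass Language.graph
      ((fun G : Σ V : Type, SimpleGraph V =>
        (⟨G.1, G.2.structure⟩ : Σ N : Type, Language.graph.Structure N)) '' C)) :
    ∀ r : ℕ, ∃ t : ℕ, ∀ G ∈ C, ¬ MS.HasSubdivClique G.2 r t :=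
  fun r => MSAux.main_helper C hws hdep r
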